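/- arXiv:1902.07686 — 5 statements merged into one kernel-verified Lean document; each statement's English description precedes it below -/
import Mathlib

section
/- Let A be an n×n real symmetric matrix with nonnegative entries such that no row of A is zero, and let a⋆ = min{a_ij : a_ij > 0}. Suppose q : [0,ζ) → Mat_n(ℝ≥0) solves the ODE q' = 2 q A q with nonnegative initial data q(0). If a_ij > 0, then for all t ∈ [0,ζ) we have q(t)_{ij} ≥ q(0)_{ij} / (1 − 2 t a⋆ q(0)_{ij}) whenever 1 − 2 t a⋆ q(0)_{ij} > 0; in particular the maximal time of existence satisfies ζ ≤ 1/(2 a⋆ q(0)_{ij}). -/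
/-!
Along the solution the entry `f = q_{ij}` satisfies the Riccati inequality `f' ≥ 2 a⋆ f²`: the
term `q_{ij} a_{ji} q_{ij}` of `(q A q)_{ij} = ∑ q_{il} a_{lk} q_{kj}` already gives it, all other
terms being nonnegative, and `a_{ji} = a_{ij} ≥ a⋆`. Hence `1/f(t) + 2 a⋆ t` is nonincreasing, i.e.
`1/q_{ij}(t) ≤ 1/q_{ij}(0) - 2 a⋆ t`, which is the lower bound; as the left side stays positive,
`[0, ζ)` cannot reach `1/(2 a⋆ q_{ij}(0))`.
-/

open Set

section Monotonicity

variable {D : Set ℝ} {f f' : ℝ → ℝ}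

lemma monotoneOn_of_hasDerivAt_nonneg (hD : Convex ℝ D) (hf : ∀ x ∈ D, HasDerivAt f (f' x) x)
    (hf'₀ : ∀ x ∈ D, 0 ≤ f' x) : MonotoneOn f D :=
  monotoneOn_of_hasDerivWithinAt_nonneg hD
    (fun x hx => (hf x hx).continuousAt.continuousWithinAt)
    (fun x hx => (hf x (interior_subset hx)).hasDerivWithinAt)
    (fun x hx => hf'₀ x (interior_subset hx))

lemma antitoneOn_of_hasDerivAt_nonpos (hD : Convex ℝ D) (hf : ∀ x ∈ D, HasDerivAt f (f' x) x)
    (hf'₀ : ∀ x ∈ D, f' x ≤ 0) : AntitoneOn f D :=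
  antitoneOn_of_hasDerivWithinAt_nonpos hD
    (fun x hx => (hf x hx).continuousAt.continuousWithinAt)
    (fun x hx => (hf x (interior_subset hx)).hasDerivWithinAt)
    (fun x hx => hf'₀ x (interior_subset hx))

lemma antitoneOn_inv_add_mul_of_sq_le_deriv (hD : Convex ℝ D) {c : ℝ}
    (hf : ∀ x ∈ D, HasDerivAt f (f' x) x) (hpos : ∀ x ∈ D, 0 < f x)
    (hf' : ∀ x ∈ D, c * f x ^ 2 ≤ f' x) :
    AntitoneOn (fun x => (f x)⁻¹ + c * x) D := by
  refine antitoneOn_of_hasDerivAt_nonpos hD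
    (fun x hx => ((hf x hx).inv (hpos x hx).ne').add ((hasDerivAt_id x).const_mul c)) ?_
  intro x hx
  have hsq : 0 < f x ^ 2 := pow_pos (hpos x hx) 2
  rw [mul_one, neg_div, neg_add_nonpos_iff, le_div_iff₀ hsq]
  exact hf' x hx

end Monotonicity

section Riccati

variable {f f' : ℝ → ℝ} {c ζ : ℝ}

lemma le_apply_of_deriv_nonneg (hf : ∀ t ∈ Ico 0 ζ, HasDerivAt f (f' t) t)
    (hf'₀ : ∀ t ∈ Ico 0 ζ, 0 ≤ f' t) {t : ℝ} (ht : t ∈ Ico 0 ζ) : f 0 ≤ f t :=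
  monotoneOn_of_hasDerivAt_nonneg (convex_Ico 0 ζ) hf hf'₀ ⟨le_rfl, ht.1.trans_lt ht.2⟩ ht ht.1

lemma inv_le_inv_sub_mul_of_sq_le_deriv (hf : ∀ t ∈ Ico 0 ζ, HasDerivAt f (f' t) t)
    (hf'₀ : ∀ t ∈ Ico 0 ζ, 0 ≤ f' t)
    (hf' : ∀ t ∈ Ico 0 ζ, c * f t ^ 2 ≤ f' t) (hf0 : 0 < f 0) {t : ℝ} (ht : t ∈ Ico 0 ζ) :
    (f t)⁻¹ ≤ (f 0)⁻¹ - c * t := by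
  have hpos : ∀ s ∈ Ico 0 ζ, 0 < f s := fun s hs =>
    hf0.trans_le (le_apply_of_deriv_nonneg hf hf'₀ hs)
  have := antitoneOn_inv_add_mul_of_sq_le_deriv (convex_Ico 0 ζ) hf hpos hf'
    ⟨le_rfl, ht.1.trans_lt ht.2⟩ ht ht.1
  simp only [mul_zero, add_zero] at this
  linarith

lemma div_le_of_sq_le_deriv (hf : ∀ t ∈ Ico 0 ζ, HasDerivAt f (f' t) t)
    (hf'₀ : ∀ t ∈ Ico 0 ζ, 0 ≤ f' t)
    (hf' : ∀ t ∈ Ico 0 ζ, c * f t ^ 2 ≤ f' t) (hf0 : 0 ≤ f 0) {t : ℝ} (ht : t ∈ Ico 0 ζ)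
    (hden : 0 < 1 - c * t * f 0) : f 0 / (1 - c * t * f 0) ≤ f t := by
  rcases hf0.eq_or_lt with hf0 | hf0
  · rw [← hf0, zero_div, hf0]
    exact le_apply_of_deriv_nonneg hf hf'₀ ht
  have hft : 0 < f t := hf0.trans_le (le_apply_of_deriv_nonneg hf hf'₀ ht)
  have := inv_le_inv_sub_mul_of_sq_le_deriv hf hf'₀ hf' hf0 ht
  rw [div_le_iff₀ hden]
  rw [inv_le_iff_one_le_mul₀ hft] at this
  field_simp at this
  nlinarith

lemma mul_le_one_of_sq_le_deriv (hf : ∀ t ∈ Ico 0 ζ, HasDerivAt f (f' t) t)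
    (hf'₀ : ∀ t ∈ Ico 0 ζ, 0 ≤ f' t)
    (hf' : ∀ t ∈ Ico 0 ζ, c * f t ^ 2 ≤ f' t) (hζ : 0 < ζ) (hf0 : 0 ≤ f 0) : ζ * (c * f 0) ≤ 1 := by
  by_contra! hcon
  have hc : 0 < c * f 0 := pos_of_mul_pos_right (one_pos.trans hcon) hζ.le
  have hf0 : 0 < f 0 := hf0.lt_of_ne fun h => by simp [← h] at hc
  have ht : (c * f 0)⁻¹ ∈ Ico 0 ζ := ⟨by positivity, (inv_lt_iff_one_lt_mul₀ hc).2 hcon⟩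
  have hzero : (f 0)⁻¹ - c * (c * f 0)⁻¹ = 0 := by
    rw [mul_inv, mul_inv_cancel_left₀ (mul_pos_iff_of_pos_right hf0 |>.1 hc).ne', sub_self]
  linarith [inv_le_inv_sub_mul_of_sq_le_deriv hf hf'₀ hf' hf0 ht,
    inv_pos.2 (hf0.trans_le (le_apply_of_deriv_nonneg hf hf'₀ ht))]

end Riccati

lemma Matrix.apply_mul_apply_mul_apply_le_mul_mul_apply {ι R : Type*} [Fintype ι] [Semiring R]
    [PartialOrder R] [IsOrderedRing R] {Q A : Matrix ι ι R} (hQ : ∀ i j, 0 ≤ Q i j)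
    (hA : ∀ i j, 0 ≤ A i j) (i j : ι) :
    Q i j * A j i * Q i j ≤ (Q * A * Q) i j := by
  have hQA : ∀ k, 0 ≤ (Q * A) i k := fun k =>
    Finset.sum_nonneg fun l _ => mul_nonneg (hQ i l) (hA l k)
  calc Q i j * A j i * Q i j ≤ (Q * A) i i * Q i j := by
        gcongr
        · exact hQ i j
        · exact Finset.single_le_sum (f := fun l => Q i l * A l i)
            (fun l _ => mul_nonneg (hQ i l) (hA l i)) (Finset.mem_univ j)
    _ ≤ (Q * A * Q) i j :=
        Finset.single_le_sum (f := fun k => (Q * A) i k * Q k j)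
          (fun k _ => mul_nonneg (hQA k) (hQ k j)) (Finset.mem_univ i)

theorem stmt0_general {n : ℕ} (A : Matrix (Fin n) (Fin n) ℝ)
    (hAsymm : A.IsSymm) (hAnonneg : ∀ i j, 0 ≤ A i j)
    (astar : ℝ)
    (hastar_le : ∀ i j, 0 < A i j → astar ≤ A i j)
    (ζ : ℝ) (hζ : 0 < ζ)
    (q : ℝ → Matrix (Fin n) (Fin n) ℝ)
    (hq_nonneg : ∀ t ∈ Ico (0:ℝ) ζ, ∀ k l, 0 ≤ q t k l)
    (hq_ode : ∀ t ∈ Ico (0:ℝ) ζ, ∀ k l,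
      HasDerivAt (fun s => q s k l) (2 * ((q t * A * q t) k l)) t)
    (i j : Fin n) (hij : 0 < A i j) :
    (∀ t ∈ Ico (0:ℝ) ζ, 0 < 1 - 2 * t * astar * q 0 i j →
      q 0 i j / (1 - 2 * t * astar * q 0 i j) ≤ q t i j) ∧
    ζ * (2 * astar * q 0 i j) ≤ 1 := by
  have h0 : (0:ℝ) ∈ Ico 0 ζ := ⟨le_rfl, hζ⟩
  have hAji : astar ≤ A j i := hAsymm.apply i j ▸ hastar_le i j hij
  have hdiag : ∀ t ∈ Ico (0:ℝ) ζ, q t i j * A j i * q t i j ≤ (q t * A * q t) i j :=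
    fun t ht => Matrix.apply_mul_apply_mul_apply_le_mul_mul_apply (hq_nonneg t ht) hAnonneg i j
  have hderiv_nonneg : ∀ t ∈ Ico (0:ℝ) ζ, 0 ≤ 2 * (q t * A * q t) i j := fun t ht => by
    have := mul_nonneg (mul_nonneg (hq_nonneg t ht i j) (hAnonneg j i)) (hq_nonneg t ht i j)
    linarith [hdiag t ht]
  have hriccati : ∀ t ∈ Ico (0:ℝ) ζ, 2 * astar * q t i j ^ 2 ≤ 2 * (q t * A * q t) i j :=
    fun t ht => by nlinarith [hdiag t ht, hq_nonneg t ht i j, hAji]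
  have hode : ∀ t ∈ Ico (0:ℝ) ζ, HasDerivAt (fun s => q s i j) (2 * (q t * A * q t) i j) t :=
    fun t ht => hq_ode t ht i j
  refine ⟨fun t ht hden => ?_, mul_le_one_of_sq_le_deriv hode hderiv_nonneg hriccati hζ
    (hq_nonneg 0 h0 i j)⟩
  have hassoc : 2 * t * astar * q 0 i j = 2 * astar * t * q 0 i j := by ring
  rw [hassoc] at hden ⊢
  exact div_le_of_sq_le_deriv hode hderiv_nonneg hriccati (hq_nonneg 0 h0 i j) ht hden

/-- Lower bound for solutions of `q' = 2 q A q` and the resulting bound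
on the time of existence. -/
theorem stmt0 {n : ℕ} (A : Matrix (Fin n) (Fin n) ℝ)
    (hAsymm : A.IsSymm) (hAnonneg : ∀ i j, 0 ≤ A i j)
    (hArow : ∀ i, ∃ j, 0 < A i j)
    (astar : ℝ)
    (hastar_le : ∀ i j, 0 < A i j → astar ≤ A i j)
    (hastar_mem : ∃ i j, 0 < A i j ∧ A i j = astar)
    (ζ : ℝ) (hζ : 0 < ζ)
    (q : ℝ → Matrix (Fin n) (Fin n) ℝ)
    (hq_nonneg : ∀ t ∈ Ico (0:ℝ) ζ, ∀ k l, 0 ≤ q t k l)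
    (hq_ode : ∀ t ∈ Ico (0:ℝ) ζ, ∀ k l,
      HasDerivAt (fun s => q s k l) (2 * ((q t * A * q t) k l)) t)
    (i j : Fin n) (hij : 0 < A i j) :
    (∀ t ∈ Ico (0:ℝ) ζ, 0 < 1 - 2 * t * astar * q 0 i j →
      q 0 i j / (1 - 2 * t * astar * q 0 i j) ≤ q t i j) ∧
    ζ * (2 * astar * q 0 i j) ≤ 1 :=
  stmt0_general A hAsymm hAnonneg astar hastar_le ζ hζ q hq_nonneg hq_ode i j hij
end

section
/- Let A be an n×n real symmetric matrix with nonnegative entries, no row zero, and consider the ODE q' = 2qAq on nonnegative matrices. Define E_δ = {q : q_ii > δ for all i}, E_cs = {q : the solution ψ(q,t) satisfies ψ(q,t)_{ij}² ≤ ψ(q,t)_{ii} ψ(q,t)_{jj} for all i,j and all t before blow-up}, and J_ε = {q : the blow-up time ζ(q) ≥ ε}. Then for all ε, δ > 0, the set J_ε ∩ E_δ ∩ E_cs is bounded; explicitly every q in this set satisfies max_{ij} q_{ij} ≤ (a⋆² ε² δ)⁻¹ where a⋆ is the smallest positive entry of A. -/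
/-!
Along the flow every diagonal entry `ψᵢᵢ` is nondecreasing. Pick `j` with `Aᵢⱼ ≥ a⋆`.
If `j = i`, then `ψᵢᵢ' ≥ 2a⋆ψᵢᵢ²`, which blows up before time `1 / (2a⋆qᵢᵢ)`.
If `j ≠ i`, then `f = ψᵢᵢ` and `G = ψᵢⱼ + ψⱼᵢ` satisfy `f' ≥ 2a⋆Gf` and `G' ≥ 4a⋆δf` (as
`ψⱼⱼ ≥ δ`), and comparison with a Riccati equation gives blow-up before `π / (4a⋆√(δqᵢᵢ))`.
Either way `ζ(q) ≥ ε` forces `a⋆²δqᵢᵢε² ≤ 1`, and the off-diagonal entries follow from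
Cauchy–Schwarz at `t = 0`.
-/

open Set Real

namespace Matrix

variable {ι R : Type*} [Fintype ι]

theorem mul_mul_apply_eq_sum [NonUnitalCommSemiring R] (A B C : Matrix ι ι R) (k l : ι) :
    (A * B * C) k l = ∑ x : ι × ι, A k x.1 * B x.1 x.2 * C x.2 l := by
  simp only [mul_apply, Finset.sum_mul, Fintype.sum_prod_type]
  exact Finset.sum_comm

variable [CommSemiring R] [PartialOrder R] [IsOrderedRing R] {A B C : Matrix ι ι R}

theorem mul_mul_apply_nonneg (hA : ∀ i j, 0 ≤ A i j) (hB : ∀ i j, 0 ≤ B i j)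
    (hC : ∀ i j, 0 ≤ C i j) (k l : ι) : 0 ≤ (A * B * C) k l := by
  rw [mul_mul_apply_eq_sum]
  exact Finset.sum_nonneg fun x _ => mul_nonneg (mul_nonneg (hA _ _) (hB _ _)) (hC _ _)

theorem le_mul_mul_apply (hA : ∀ i j, 0 ≤ A i j) (hB : ∀ i j, 0 ≤ B i j)
    (hC : ∀ i j, 0 ≤ C i j) (k p m l : ι) : A k p * B p m * C m l ≤ (A * B * C) k l := by
  rw [mul_mul_apply_eq_sum]
  exact Finset.single_le_sum (f := fun x : ι × ι => A k x.1 * B x.1 x.2 * C x.2 l)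
    (fun x _ => mul_nonneg (mul_nonneg (hA _ _) (hB _ _)) (hC _ _)) (Finset.mem_univ (p, m))

theorem add_le_mul_mul_apply (hA : ∀ i j, 0 ≤ A i j) (hB : ∀ i j, 0 ≤ B i j)
    (hC : ∀ i j, 0 ≤ C i j) (k l : ι) {x y : ι × ι} (hxy : x ≠ y) :
    A k x.1 * B x.1 x.2 * C x.2 l + A k y.1 * B y.1 y.2 * C y.2 l ≤ (A * B * C) k l := by
  classical
  rw [mul_mul_apply_eq_sum,
    ← Finset.sum_pair (f := fun x : ι × ι => A k x.1 * B x.1 x.2 * C x.2 l) hxy]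
  exact Finset.sum_le_sum_of_subset_of_nonneg (Finset.subset_univ _)
    fun x _ _ => mul_nonneg (mul_nonneg (hA _ _) (hB _ _)) (hC _ _)

end Matrix

theorem monotoneOn_Icc_of_hasDerivAt_nonneg {f f' : ℝ → ℝ} {a b : ℝ}
    (hf : ContinuousOn f (Icc a b)) (hf' : ∀ t ∈ Ioo a b, HasDerivAt f (f' t) t)
    (hf'_nonneg : ∀ t ∈ Ioo a b, 0 ≤ f' t) : MonotoneOn f (Icc a b) :=
  monotoneOn_of_hasDerivWithinAt_nonneg (convex_Icc a b) hf
    (by simpa using fun t ht => (hf' t ht).hasDerivWithinAt) (by simpa using hf'_nonneg)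

theorem le_of_forall_Ico_le {g : ℝ → ℝ} {a b c : ℝ} (hab : a < b)
    (hg : ContinuousWithinAt g (Ico a b) b) (h : ∀ t ∈ Ico a b, g t ≤ c) : g b ≤ c :=
  ContinuousWithinAt.closure_le (by rw [closure_Ico hab.ne]; exact right_mem_Icc.2 hab.le)
    hg continuousWithinAt_const h

/-- Blow-up of `f' ≥ c f²`, read off from `(-1/f)' ≥ c`. -/
theorem mul_mul_lt_one_of_mul_sq_le_deriv {f f' : ℝ → ℝ} {c T : ℝ} (hc : 0 ≤ c)
    (hf : ∀ t ∈ Icc 0 T, HasDerivAt f (f' t) t) (hf' : ∀ t ∈ Icc 0 T, c * f t ^ 2 ≤ f' t)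
    (hf0 : 0 < f 0) : c * f 0 * T < 1 := by
  rcases lt_or_ge T 0 with hT | hT
  · exact (mul_nonpos_of_nonneg_of_nonpos (by positivity) hT.le).trans_lt one_pos
  have hcont : ContinuousOn f (Icc 0 T) := fun t ht => (hf t ht).continuousAt.continuousWithinAt
  have hmono : MonotoneOn f (Icc 0 T) :=
    monotoneOn_Icc_of_hasDerivAt_nonneg hcont (fun t ht => hf t (Ioo_subset_Icc_self ht))
      fun t ht => (by positivity : 0 ≤ c * f t ^ 2).trans (hf' t (Ioo_subset_Icc_self ht))
  have hpos : ∀ t ∈ Icc 0 T, 0 < f t := fun t ht =>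
    hf0.trans_le (hmono (left_mem_Icc.2 hT) ht ht.1)
  have hrecip : MonotoneOn (fun t => -(f t)⁻¹ - c * t) (Icc 0 T) := by
    refine monotoneOn_Icc_of_hasDerivAt_nonneg (f' := fun t => f' t / f t ^ 2 - c) ?_ ?_ ?_
    · exact ((hcont.inv₀ fun t ht => (hpos t ht).ne').neg).sub
        (continuousOn_const.mul continuousOn_id)
    · intro t ht
      exact ((((hf t (Ioo_subset_Icc_self ht)).inv (hpos t (Ioo_subset_Icc_self ht)).ne').neg).sub
        ((hasDerivAt_id t).const_mul c)).congr_deriv (by ring)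
    · intro t ht
      have := hpos t (Ioo_subset_Icc_self ht)
      rw [sub_nonneg, le_div_iff₀ (by positivity)]
      exact hf' t (Ioo_subset_Icc_self ht)
  have hrecipT := hrecip (left_mem_Icc.2 hT) (right_mem_Icc.2 hT) hT
  have hinvT := inv_pos.2 (hpos T (right_mem_Icc.2 hT))
  simp only [mul_zero, sub_zero] at hrecipT
  have hlt : c * T < (f 0)⁻¹ := by linarith
  calc c * f 0 * T = f 0 * (c * T) := by ring
    _ < f 0 * (f 0)⁻¹ := by gcongr
    _ = 1 := mul_inv_cancel₀ hf0.ne'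

/-- Comparison with `tan`: `arctan (k u) - k b t` is nondecreasing for `k = √(c / b)`. -/
theorem mul_mul_sq_le_of_add_mul_sq_le_deriv {u u' : ℝ → ℝ} {b c T : ℝ} (hb : 0 < b)
    (hc : 0 ≤ c) (hT : 0 ≤ T) (hu : ContinuousOn u (Icc 0 T))
    (hu' : ∀ t ∈ Ioo 0 T, HasDerivAt u (u' t) t) (hle : ∀ t ∈ Ioo 0 T, b + c * u t ^ 2 ≤ u' t)
    (hu0 : 0 ≤ u 0) : c * b * T ^ 2 ≤ π ^ 2 / 4 := by
  set k := Real.sqrt (c / b)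
  have hk : 0 ≤ k := Real.sqrt_nonneg _
  have hkb : k ^ 2 * b = c := by
    rw [Real.sq_sqrt (div_nonneg hc hb.le), div_mul_cancel₀ c hb.ne']
  have hmono : MonotoneOn (fun t => arctan (k * u t) - k * b * t) (Icc 0 T) := by
    refine monotoneOn_Icc_of_hasDerivAt_nonneg
      (f' := fun t => 1 / (1 + (k * u t) ^ 2) * (k * u' t) - k * b) ?_ ?_ ?_
    · exact (Real.continuous_arctan.comp_continuousOn (continuousOn_const.mul hu)).sub
        (continuousOn_const.mul continuousOn_id)
    · intro t ht
      exact ((hu' t ht).const_mul k).arctan.sub ((hasDerivAt_id t).const_mul (k * b))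
        |>.congr_deriv (by simp)
    · intro t ht
      have hden : 0 < 1 + (k * u t) ^ 2 := by positivity
      rw [sub_nonneg, one_div, inv_mul_eq_div, le_div_iff₀ hden]
      calc k * b * (1 + (k * u t) ^ 2) = k * (b + k ^ 2 * b * u t ^ 2) := by ring
        _ ≤ k * u' t := by rw [hkb]; exact mul_le_mul_of_nonneg_left (hle t ht) hk
  have hΦ := hmono (left_mem_Icc.2 hT) (right_mem_Icc.2 hT) hT
  have harctan0 : 0 ≤ arctan (k * u 0) := arctan_nonneg.2 (mul_nonneg hk hu0)
  have hkbT : k * b * T < π / 2 := by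
    simp only [mul_zero, sub_zero] at hΦ
    linarith [arctan_lt_pi_div_two (k * u T)]
  calc c * b * T ^ 2 = (k * b * T) ^ 2 := by rw [← hkb]; ring
    _ ≤ (π / 2) ^ 2 := by gcongr
    _ = π ^ 2 / 4 := by ring

/-- With `u = ∫₀ᵗ f`, first `G ≥ γ u`, then `f ≥ f 0 + (β γ / 2) u²`, so `u` is a supersolution
of a Riccati equation. -/
theorem mul_mul_mul_sq_le_of_coupled_deriv {f G f' G' : ℝ → ℝ} {β γ T : ℝ} (hβ : 0 ≤ β)
    (hγ : 0 ≤ γ) (hT : 0 ≤ T) (hf : ∀ t ∈ Icc 0 T, HasDerivAt f (f' t) t)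
    (hG : ∀ t ∈ Icc 0 T, HasDerivAt G (G' t) t) (hf0 : 0 < f 0) (hG0 : 0 ≤ G 0)
    (hf_nonneg : ∀ t ∈ Icc 0 T, 0 ≤ f t) (hf' : ∀ t ∈ Icc 0 T, β * G t * f t ≤ f' t)
    (hG' : ∀ t ∈ Icc 0 T, γ * f t ≤ G' t) : β * γ * f 0 * T ^ 2 ≤ π ^ 2 / 2 := by
  have hfc : ContinuousOn f (Icc 0 T) := fun t ht => (hf t ht).continuousAt.continuousWithinAt
  have hGc : ContinuousOn G (Icc 0 T) := fun t ht => (hG t ht).continuousAt.continuousWithinAt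
  set u : ℝ → ℝ := fun t => ∫ s in (0 : ℝ)..t, f s
  have hu0 : u 0 = 0 := intervalIntegral.integral_same
  have hu : ContinuousOn u (Icc 0 T) := by
    have := intervalIntegral.continuousOn_primitive_interval'
      (hfc.intervalIntegrable_of_Icc (μ := MeasureTheory.volume) hT)
      (left_mem_uIcc (a := (0 : ℝ)) (b := T))
    rwa [uIcc_of_le hT] at this
  have hu' : ∀ t ∈ Ioo 0 T, HasDerivAt u (f t) t := fun t ht =>
    intervalIntegral.integral_hasDerivAt_right
      ((hfc.mono (Icc_subset_Icc_right ht.2.le)).intervalIntegrable_of_Icc ht.1.le)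
      ((hfc.mono Ioo_subset_Icc_self).stronglyMeasurableAtFilter isOpen_Ioo t ht)
      (hf t (Ioo_subset_Icc_self ht)).continuousAt
  have hGu : ∀ t ∈ Icc 0 T, γ * u t ≤ G t := by
    have hmono : MonotoneOn (fun t => G t - γ * u t) (Icc 0 T) :=
      monotoneOn_Icc_of_hasDerivAt_nonneg (hGc.sub (continuousOn_const.mul hu))
        (fun t ht => (hG t (Ioo_subset_Icc_self ht)).sub ((hu' t ht).const_mul γ))
        fun t ht => sub_nonneg.2 (hG' t (Ioo_subset_Icc_self ht))
    intro t ht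
    have := hmono (left_mem_Icc.2 hT) ht ht.1
    simp only [hu0, mul_zero, sub_zero] at this
    linarith
  have hfu : ∀ t ∈ Ioo 0 T, f 0 + β * γ / 2 * u t ^ 2 ≤ f t := by
    have hmono : MonotoneOn (fun t => f t - β * γ / 2 * u t ^ 2) (Icc 0 T) := by
      refine monotoneOn_Icc_of_hasDerivAt_nonneg (hfc.sub (continuousOn_const.mul (hu.pow 2)))
        (fun t ht => (hf t (Ioo_subset_Icc_self ht)).sub (((hu' t ht).pow 2).const_mul _)) ?_
      intro t ht
      have htI := Ioo_subset_Icc_self ht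
      have hGf : β * (γ * u t) * f t ≤ β * G t * f t := by
        gcongr
        exacts [hf_nonneg t htI, hGu t htI]
      have := hf' t htI
      nlinarith
    intro t ht
    have := hmono (left_mem_Icc.2 hT) (Ioo_subset_Icc_self ht) ht.1.le
    simp only [hu0] at this
    linarith
  have := mul_mul_sq_le_of_add_mul_sq_le_deriv hf0 (by positivity) hT hu hu' hfu hu0.ge
  linarith

structure IsNonnegSolutionOn {ι : Type*} [Fintype ι] (A : Matrix ι ι ℝ) (x : ℝ → Matrix ι ι ℝ)
    (T : ℝ) : Prop where
  nonneg : ∀ t ∈ Icc 0 T, ∀ k l, 0 ≤ x t k l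
  hasDerivAt : ∀ t ∈ Icc 0 T, ∀ k l,
    HasDerivAt (fun s => x s k l) (2 * (x t * A * x t) k l) t

namespace IsNonnegSolutionOn

variable {ι : Type*} [Fintype ι] {A : Matrix ι ι ℝ} {x : ℝ → Matrix ι ι ℝ} {T : ℝ}

theorem le_diag (h : IsNonnegSolutionOn A x T) (hA : ∀ i j, 0 ≤ A i j) (i : ι) :
    ∀ t ∈ Icc 0 T, x 0 i i ≤ x t i i := by
  have hmono : MonotoneOn (fun t => x t i i) (Icc 0 T) :=
    monotoneOn_Icc_of_hasDerivAt_nonneg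
      (fun t ht => (h.hasDerivAt t ht i i).continuousAt.continuousWithinAt)
      (fun t ht => h.hasDerivAt t (Ioo_subset_Icc_self ht) i i)
      fun t ht => mul_nonneg zero_le_two <|
        Matrix.mul_mul_apply_nonneg (h.nonneg t (Ioo_subset_Icc_self ht)) hA
          (h.nonneg t (Ioo_subset_Icc_self ht)) i i
  exact fun t ht => hmono (left_mem_Icc.2 (ht.1.trans ht.2)) ht ht.1

theorem mul_diag_mul_lt_one (h : IsNonnegSolutionOn A x T) (hA : ∀ i j, 0 ≤ A i j) {i : ι}
    {a : ℝ} (ha : 0 ≤ a) (hai : a ≤ A i i) (hx0 : 0 < x 0 i i) : 2 * a * x 0 i i * T < 1 :=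
  mul_mul_lt_one_of_mul_sq_le_deriv (by positivity) (fun t ht => h.hasDerivAt t ht i i)
    (fun t ht => by
      have hsq := Matrix.le_mul_mul_apply (h.nonneg t ht) hA (h.nonneg t ht) i i i i
      have hai' : a * x t i i ^ 2 ≤ A i i * x t i i ^ 2 := by gcongr
      linarith)
    hx0

theorem sq_mul_diag_mul_sq_le_of_ne (h : IsNonnegSolutionOn A x T) (hA : ∀ i j, 0 ≤ A i j)
    {i j : ι} (hij : i ≠ j) {a δ : ℝ} (ha : 0 ≤ a) (haij : a ≤ A i j) (haji : a ≤ A j i)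
    (hδ : 0 ≤ δ) (hδj : δ ≤ x 0 j j) (hx0 : 0 < x 0 i i) (hT : 0 ≤ T) :
    a ^ 2 * δ * x 0 i i * T ^ 2 ≤ π ^ 2 / 16 := by
  suffices 2 * a * (4 * a * δ) * x 0 i i * T ^ 2 ≤ π ^ 2 / 2 by linarith
  refine mul_mul_mul_sq_le_of_coupled_deriv (G := fun t => x t i j + x t j i) (by positivity)
    (by positivity) hT (fun t ht => h.hasDerivAt t ht i i)
    (fun t ht => (h.hasDerivAt t ht i j).add (h.hasDerivAt t ht j i)) hx0
    (add_nonneg (h.nonneg 0 (left_mem_Icc.2 hT) i j) (h.nonneg 0 (left_mem_Icc.2 hT) j i))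
    (fun t ht => h.nonneg t ht i i) (fun t ht => ?_) (fun t ht => ?_)
  · have hx := h.nonneg t ht
    have hsum := Matrix.add_le_mul_mul_apply hx hA hx i i
      (x := (j, i)) (y := (i, j)) (by simp [hij.symm])
    have h1 : a * x t i j * x t i i ≤ x t i j * A j i * x t i i := by
      nlinarith [mul_nonneg (hx i j) (hx i i)]
    have h2 : a * x t j i * x t i i ≤ x t i i * A i j * x t j i := by
      nlinarith [mul_nonneg (hx j i) (hx i i)]
    linarith
  · have hx := h.nonneg t ht
    have hjj : δ ≤ x t j j := hδj.trans (h.le_diag hA j t ht)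
    have h1 := Matrix.le_mul_mul_apply hx hA hx i i j j
    have h2 := Matrix.le_mul_mul_apply hx hA hx j j i i
    have haδ : a * δ ≤ A i j * x t j j := mul_le_mul haij hjj hδ (ha.trans haij)
    have haδ' : a * δ ≤ A j i * x t j j := mul_le_mul haji hjj hδ (ha.trans haji)
    nlinarith [hx i i]

theorem sq_mul_diag_mul_sq_le_one (h : IsNonnegSolutionOn A x T) (hA : ∀ i j, 0 ≤ A i j)
    {i j : ι} {a δ : ℝ} (ha : 0 ≤ a) (haij : a ≤ A i j) (haji : a ≤ A j i) (hδ : 0 < δ)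
    (hδi : δ ≤ x 0 i i) (hδj : δ ≤ x 0 j j) (hT : 0 ≤ T) :
    a ^ 2 * δ * x 0 i i * T ^ 2 ≤ 1 := by
  have hx0 : 0 < x 0 i i := hδ.trans_le hδi
  rcases eq_or_ne i j with rfl | hij
  · have hlt := h.mul_diag_mul_lt_one hA ha haij hx0
    have hprod : 0 ≤ a * x 0 i i * T := by positivity
    calc a ^ 2 * δ * x 0 i i * T ^ 2 ≤ a ^ 2 * x 0 i i * x 0 i i * T ^ 2 := by gcongr
      _ = (a * x 0 i i * T) ^ 2 := by ring
      _ ≤ 1 := by nlinarith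
  · have hle := h.sq_mul_diag_mul_sq_le_of_ne hA hij ha haij haji hδ.le hδj hx0 hT
    have hπ : π ^ 2 ≤ 4 ^ 2 := by gcongr; exact pi_le_four
    linarith

end IsNonnegSolutionOn

theorem stmt1_general {n : ℕ} (A : Matrix (Fin n) (Fin n) ℝ)
    (hAsymm : A.IsSymm) (hAnonneg : ∀ i j, 0 ≤ A i j)
    (hArow : ∀ i, ∃ j, 0 < A i j)
    (astar : ℝ)
    (hastar_le : ∀ i j, 0 < A i j → astar ≤ A i j)
    (hastar_mem : ∃ i j, 0 < A i j ∧ A i j = astar)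
    (ψ : Matrix (Fin n) (Fin n) ℝ → ℝ → Matrix (Fin n) (Fin n) ℝ)
    (ζ : Matrix (Fin n) (Fin n) ℝ → ℝ)
    (hflow0 : ∀ q, ψ q 0 = q)
    (hflow_nonneg : ∀ q, ∀ t ∈ Ico (0:ℝ) (ζ q), ∀ k l, 0 ≤ ψ q t k l)
    (hflow_ode : ∀ q, ∀ t ∈ Ico (0:ℝ) (ζ q), ∀ k l,
      HasDerivAt (fun s => ψ q s k l) (2 * ((ψ q t * A * ψ q t) k l)) t)
    (ε δ : ℝ) (hε : 0 < ε) (hδ : 0 < δ)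
    (q : Matrix (Fin n) (Fin n) ℝ)
    (hJ : ε ≤ ζ q)
    (hEδ : ∀ i, δ < q i i)
    (hEcs : ∀ t ∈ Ico (0:ℝ) (ζ q), ∀ i j, (ψ q t i j)^2 ≤ ψ q t i i * ψ q t j j) :
    ∀ i j, q i j ≤ (astar^2 * ε^2 * δ)⁻¹ := by
  have ha : 0 < astar := by
    obtain ⟨i, j, hpos, rfl⟩ := hastar_mem
    exact hpos
  have hsol : ∀ T ∈ Ico 0 ε, IsNonnegSolutionOn A (ψ q) T := fun T hT =>
    have hsub : Icc 0 T ⊆ Ico 0 (ζ q) := Icc_subset_Ico_right (hT.2.trans_le hJ)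
    ⟨fun t ht => hflow_nonneg q t (hsub ht), fun t ht => hflow_ode q t (hsub ht)⟩
  have hdiag : ∀ i, q i i ≤ (astar ^ 2 * ε ^ 2 * δ)⁻¹ := by
    intro i
    obtain ⟨j, hij⟩ := hArow i
    have hbound : astar ^ 2 * δ * q i i * ε ^ 2 ≤ 1 := by
      refine le_of_forall_Ico_le (g := fun T => astar ^ 2 * δ * q i i * T ^ 2) hε
        (by fun_prop) fun T hT => ?_
      have := (hsol T hT).sq_mul_diag_mul_sq_le_one hAnonneg ha.le (hastar_le i j hij)
        (hAsymm.apply i j ▸ hastar_le i j hij) hδ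
        (by rw [hflow0]; exact (hEδ i).le) (by rw [hflow0]; exact (hEδ j).le) hT.1
      rwa [hflow0] at this
    rw [← one_div, le_div_iff₀ (by positivity)]
    linarith
  intro i j
  have hcs := hEcs 0 ⟨le_rfl, hε.trans_le hJ⟩ i j
  rw [hflow0] at hcs
  refine le_of_sq_le_sq (hcs.trans ?_) (by positivity)
  rw [sq]
  exact mul_le_mul (hdiag i) (hdiag j) (hδ.trans (hEδ j)).le (by positivity)

/-- Boundedness of the set `J_ε ∩ E_δ ∩ E_cs` for the flow of `q' = 2 q A q`:
any initial matrix whose solution exists at least for time `ε`, has diagonal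
entries larger than `δ`, and satisfies the Cauchy–Schwarz invariance along the
flow, has all entries bounded by `(a⋆² ε² δ)⁻¹`. -/
theorem stmt1 {n : ℕ} (A : Matrix (Fin n) (Fin n) ℝ)
    (hAsymm : A.IsSymm) (hAnonneg : ∀ i j, 0 ≤ A i j)
    (hArow : ∀ i, ∃ j, 0 < A i j)
    (astar : ℝ)
    (hastar_le : ∀ i j, 0 < A i j → astar ≤ A i j)
    (hastar_mem : ∃ i j, 0 < A i j ∧ A i j = astar)
    (ψ : Matrix (Fin n) (Fin n) ℝ → ℝ → Matrix (Fin n) (Fin n) ℝ)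
    (ζ : Matrix (Fin n) (Fin n) ℝ → ℝ)
    (hflow0 : ∀ q, ψ q 0 = q)
    (hflow_nonneg : ∀ q, ∀ t ∈ Ico (0:ℝ) (ζ q), ∀ k l, 0 ≤ ψ q t k l)
    (hflow_ode : ∀ q, ∀ t ∈ Ico (0:ℝ) (ζ q), ∀ k l,
      HasDerivAt (fun s => ψ q s k l) (2 * ((ψ q t * A * ψ q t) k l)) t)
    (ε δ : ℝ) (hε : 0 < ε) (hδ : 0 < δ)
    (q : Matrix (Fin n) (Fin n) ℝ)
    (hq_nonneg : ∀ k l, 0 ≤ q k l)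
    (hJ : ε ≤ ζ q)
    (hEδ : ∀ i, δ < q i i)
    (hEcs : ∀ t ∈ Ico (0:ℝ) (ζ q), ∀ i j, (ψ q t i j)^2 ≤ ψ q t i i * ψ q t j j) :
    ∀ i j, q i j ≤ (astar^2 * ε^2 * δ)⁻¹ :=
  stmt1_general A hAsymm hAnonneg hArow astar hastar_le hastar_mem ψ ζ hflow0 hflow_nonneg hflow_ode
    ε δ hε hδ q hJ hEδ hEcs
end

section
/- Under the setup of the operator T above (bilinear kernel with finite rank), if additionally every eigenfunction of T corresponding to the operator norm eigenvalue λ = ‖T‖ is single-signed μ₀-almost everywhere and the eigenspace is one-dimensional, then this eigenspace is contained in E₊ = span(π₁,…,π_n), and λ equals the largest eigenvalue of the n×n matrix Λ with entries Λ_{ij} = 2 ∑_{k=1}^n a_{ik} ⟨π_k π_j, μ₀⟩, i.e. Λ is the matrix of T restricted to E₊ in the basis π₁,…,π_n. -/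
/-!
Since `A` has no entries coupling the two blocks, `T` commutes with `f ↦ f ∘ R`. Hence `f ∘ R` is
again a top eigenfunction, so by one-dimensionality `f ∘ R = c f` with `c² = 1`; `c = -1` would
make the single-signed `f` vanish, so `f` is even. An even `f` is orthogonal to the odd
`π_{n+1}, …, π_{n+m}`, so `T f = λ f` lies in `E₊`, where `T` acts by the matrix `Λ`. Finally the
top eigenvector of `T` gives one of `Λ` for `λ`, while any eigenvalue `μ` of `Λ` is an eigenvalue
of `T` on `E₊`, so `|μ| ≤ ‖T‖ = λ`.
-/

open MeasureTheory Function
open scoped Matrix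

section Involution

variable {S : Type*} [MeasurableSpace S] {μ : Measure S} {R : S → S}

theorem MeasureTheory.MeasurePreserving.integral_comp_of_involutive {E : Type*}
    [NormedAddCommGroup E] [NormedSpace ℝ E] (hR : MeasurePreserving R μ μ) (hRR : Involutive R)
    (g : S → E) :
    ∫ x, g (R x) ∂μ = ∫ x, g x ∂μ :=
  hR.integral_comp (MeasurableEquiv.ofInvolutive R hRR hR.measurable).measurableEmbedding g

theorem integral_comp_mul_eq_integral_mul_comp (hR : MeasurePreserving R μ μ)
    (hRR : Involutive R) (f g : S → ℝ) :
    ∫ x, f (R x) * g x ∂μ = ∫ x, f x * g (R x) ∂μ := by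
  simpa only [hRR _] using hR.integral_comp_of_involutive hRR fun x => f x * g (R x)

theorem integral_comp_mul_of_even (hR : MeasurePreserving R μ μ) (hRR : Involutive R)
    (f : S → ℝ) {g : S → ℝ} (hg : ∀ x, g (R x) = g x) :
    ∫ x, f (R x) * g x ∂μ = ∫ x, f x * g x ∂μ := by
  simp only [integral_comp_mul_eq_integral_mul_comp hR hRR, hg]

theorem integral_comp_mul_of_odd (hR : MeasurePreserving R μ μ) (hRR : Involutive R)
    (f : S → ℝ) {g : S → ℝ} (hg : ∀ x, g (R x) = -g x) :
    ∫ x, f (R x) * g x ∂μ = -∫ x, f x * g x ∂μ := by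
  simp only [integral_comp_mul_eq_integral_mul_comp hR hRR, hg, mul_neg, integral_neg]

theorem integral_mul_eq_zero_of_even_of_odd (hR : MeasurePreserving R μ μ) (hRR : Involutive R)
    {f g : S → ℝ} (hf : (fun x => f (R x)) =ᵐ[μ] f) (hg : ∀ x, g (R x) = -g x) :
    ∫ x, f x * g x ∂μ = 0 := by
  have h := integral_comp_mul_of_odd hR hRR f hg
  rw [integral_congr_ae (by filter_upwards [hf] with x hx; rw [hx])] at h
  linarith

theorem ae_eq_zero_of_odd_of_signed (hR : Measure.QuasiMeasurePreserving R μ μ) {f : S → ℝ}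
    (hodd : (fun x => f (R x)) =ᵐ[μ] fun x => -f x)
    (hsign : (∀ᵐ x ∂μ, 0 ≤ f x) ∨ ∀ᵐ x ∂μ, f x ≤ 0) :
    f =ᵐ[μ] 0 := by
  rcases hsign with hpos | hneg
  · filter_upwards [hodd, hpos, hR.ae hpos] with x h₁ h₂ h₃
    simp only [Pi.zero_apply]
    linarith
  · filter_upwards [hodd, hneg, hR.ae hneg] with x h₁ h₂ h₃
    simp only [Pi.zero_apply]
    linarith

theorem eq_one_or_eq_neg_one_of_comp_ae_eq_mul (hR : Measure.QuasiMeasurePreserving R μ μ)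
    (hRR : Involutive R) {f : S → ℝ} {c : ℝ} (hc : (fun x => f (R x)) =ᵐ[μ] fun x => c * f x)
    (hf0 : ¬ f =ᵐ[μ] 0) : c = 1 ∨ c = -1 := by
  rw [← mul_self_eq_one_iff]
  by_contra hc1
  apply hf0
  filter_upwards [hc, hR.ae hc] with x h₁ h₂
  rw [hRR x, h₁] at h₂
  have : (c * c - 1) * f x = 0 := by linarith
  exact (mul_eq_zero.mp this).resolve_left (sub_ne_zero.mpr hc1)

theorem comp_ae_eq_self_of_signed (hR : Measure.QuasiMeasurePreserving R μ μ)
    (hRR : Involutive R) {f : S → ℝ} {c : ℝ} (hc : (fun x => f (R x)) =ᵐ[μ] fun x => c * f x)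
    (hf0 : ¬ f =ᵐ[μ] 0) (hsign : (∀ᵐ x ∂μ, 0 ≤ f x) ∨ ∀ᵐ x ∂μ, f x ≤ 0) :
    (fun x => f (R x)) =ᵐ[μ] f := by
  rcases eq_one_or_eq_neg_one_of_comp_ae_eq_mul hR hRR hc hf0 with rfl | rfl
  · simpa using hc
  · exact absurd (ae_eq_zero_of_odd_of_signed hR (by simpa using hc) hsign) hf0

end Involution

theorem integral_sq_pos_of_memLp {S : Type*} [MeasurableSpace S] {μ : Measure S} {f : S → ℝ}
    (hf : MemLp f 2 μ) (hf0 : ¬ f =ᵐ[μ] 0) : 0 < ∫ x, f x ^ 2 ∂μ := by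
  refine (integral_nonneg fun x => sq_nonneg (f x)).lt_of_ne fun h => hf0 ?_
  filter_upwards [(integral_eq_zero_iff_of_nonneg (fun x => sq_nonneg (f x))
    hf.integrable_sq).mp h.symm] with x hx
  exact pow_eq_zero_iff two_ne_zero |>.mp hx

section PlusComb

variable {S : Type*} {n m : ℕ} (π : Fin (n + m) → S → ℝ)

/-- The element `∑ vᵢ πᵢ` of `E₊ = span(π₁, …, πₙ)`. -/
def plusComb (v : Fin n → ℝ) (x : S) : ℝ :=
  ∑ i, v i * π (Fin.castAdd m i) x

variable {π} {R : S → S}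

@[simp]
theorem plusComb_zero : plusComb π (0 : Fin n → ℝ) = 0 := by
  funext x
  simp [plusComb]

theorem plusComb_smul (c : ℝ) (v : Fin n → ℝ) (x : S) :
    plusComb π (c • v) x = c * plusComb π v x := by
  simp only [plusComb, Pi.smul_apply, smul_eq_mul, Finset.mul_sum, mul_assoc]

theorem plusComb_sub (v w : Fin n → ℝ) (x : S) :
    plusComb π (v - w) x = plusComb π v x - plusComb π w x := by
  simp only [plusComb, Pi.sub_apply, sub_mul, Finset.sum_sub_distrib]

theorem plusComb_comp
    (heven : ∀ i : Fin (n + m), (i : ℕ) < n → (fun x => π i (R x)) = π i) (v : Fin n → ℝ) :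
    (fun x => plusComb π v (R x)) = plusComb π v := by
  funext x
  simp only [plusComb, congrFun (heven (Fin.castAdd m _) (Fin.castAdd_lt m _))]

end PlusComb

section KernelOperator

variable {S : Type*} [MeasurableSpace S] (μ : Measure S) {n m : ℕ}

noncomputable def kernelOp (A : Matrix (Fin (n + m)) (Fin (n + m)) ℝ) (π : Fin (n + m) → S → ℝ)
    (f : S → ℝ) (x : S) : ℝ :=
  2 * ∑ i, ∑ j, A i j * (∫ y, f y * π i y ∂μ) * π j x

noncomputable def gram (π : Fin (n + m) → S → ℝ) : Matrix (Fin n) (Fin n) ℝ :=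
  Matrix.of fun k j => ∫ x, π (Fin.castAdd m k) x * π (Fin.castAdd m j) x ∂μ

/-- The matrix `Λ` of `kernelOp` restricted to `E₊`. -/
noncomputable def plusMatrix (A : Matrix (Fin (n + m)) (Fin (n + m)) ℝ)
    (π : Fin (n + m) → S → ℝ) : Matrix (Fin n) (Fin n) ℝ :=
  (2 : ℝ) • (A.submatrix (Fin.castAdd m) (Fin.castAdd m) * gram μ π)

variable {μ} {A : Matrix (Fin (n + m)) (Fin (n + m)) ℝ} {π : Fin (n + m) → S → ℝ} {R : S → S}

theorem integral_plusComb_mul (hπL2 : ∀ i, MemLp (π i) 2 μ) (v : Fin n → ℝ) (i : Fin n) :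
    ∫ y, plusComb π v y * π (Fin.castAdd m i) y ∂μ = (gram μ π *ᵥ v) i := by
  have hint : ∀ k j, Integrable (fun y => π k y * π j y) μ := fun k j =>
    (hπL2 k).integrable_mul (hπL2 j)
  simp only [plusComb, Finset.sum_mul, mul_assoc]
  rw [integral_finsetSum _ fun k _ => (hint _ _).const_mul (v k)]
  simp only [integral_const_mul, Matrix.mulVec, dotProduct, gram, Matrix.of_apply]
  exact Finset.sum_congr rfl fun k _ => by
    rw [mul_comm]
    congr 1
    exact integral_congr_ae (Filter.Eventually.of_forall fun y => mul_comm _ _)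

theorem memLp_plusComb (hπL2 : ∀ i, MemLp (π i) 2 μ) (v : Fin n → ℝ) :
    MemLp (plusComb π v) 2 μ :=
  memLp_finsetSum Finset.univ fun i _ => (hπL2 (Fin.castAdd m i)).const_mul (v i)

theorem kernelOp_congr_ae {f g : S → ℝ} (h : f =ᵐ[μ] g) : kernelOp μ A π f = kernelOp μ A π g := by
  have hint : ∀ i, ∫ y, f y * π i y ∂μ = ∫ y, g y * π i y ∂μ := fun i =>
    integral_congr_ae (by filter_upwards [h] with y hy; rw [hy])
  funext x
  simp only [kernelOp, hint]

theorem kernelOp_comp (hR : MeasurePreserving R μ μ) (hRR : Involutive R)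
    (heven : ∀ i : Fin (n + m), (i : ℕ) < n → (fun x => π i (R x)) = π i)
    (hodd : ∀ i : Fin (n + m), n ≤ (i : ℕ) → (fun x => π i (R x)) = fun x => - π i x)
    (hblock : ∀ i j : Fin (n + m),
      (((i : ℕ) < n ∧ n ≤ (j : ℕ)) ∨ (n ≤ (i : ℕ) ∧ (j : ℕ) < n)) → A i j = 0)
    (f : S → ℝ) (x : S) :
    kernelOp μ A π (fun y => f (R y)) x = kernelOp μ A π f (R x) := by
  simp only [kernelOp]
  congr 1
  refine Finset.sum_congr rfl fun i _ => Finset.sum_congr rfl fun j _ => ?_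
  rcases lt_or_ge (i : ℕ) n with hi | hi <;> rcases lt_or_ge (j : ℕ) n with hj | hj
  · rw [integral_comp_mul_of_even hR hRR f (congrFun (heven i hi)), congrFun (heven j hj)]
  · simp [hblock i j (Or.inl ⟨hi, hj⟩)]
  · simp [hblock i j (Or.inr ⟨hi, hj⟩)]
  · rw [integral_comp_mul_of_odd hR hRR f (congrFun (hodd i hi)), congrFun (hodd j hj)]
    ring

theorem kernelOp_eq_plusComb_of_even (hR : MeasurePreserving R μ μ) (hRR : Involutive R)
    (hodd : ∀ i : Fin (n + m), n ≤ (i : ℕ) → (fun x => π i (R x)) = fun x => - π i x)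
    (hblock : ∀ i j : Fin (n + m),
      (((i : ℕ) < n ∧ n ≤ (j : ℕ)) ∨ (n ≤ (i : ℕ) ∧ (j : ℕ) < n)) → A i j = 0)
    {f : S → ℝ} (hf : (fun x => f (R x)) =ᵐ[μ] f) :
    kernelOp μ A π f = plusComb π ((2 : ℝ) • ((fun i => ∫ y, f y * π (Fin.castAdd m i) y ∂μ) ᵥ*
      A.submatrix (Fin.castAdd m) (Fin.castAdd m))) := by
  funext x
  have hcoeff : ∀ i : Fin m, ∫ y, f y * π (Fin.natAdd n i) y ∂μ = 0 := fun i =>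
    integral_mul_eq_zero_of_even_of_odd hR hRR hf (congrFun (hodd _ (Fin.le_coe_natAdd n i)))
  have hA : ∀ i : Fin n, ∀ j : Fin m, A (Fin.castAdd m i) (Fin.natAdd n j) = 0 := fun i j =>
    hblock _ _ (Or.inl ⟨Fin.castAdd_lt m i, Fin.le_coe_natAdd n j⟩)
  simp only [kernelOp, plusComb, Fin.sum_univ_add, hcoeff, hA, mul_zero, zero_mul,
    Finset.sum_const_zero, add_zero, Pi.smul_apply, smul_eq_mul, Matrix.vecMul, dotProduct,
    Matrix.submatrix_apply, Finset.mul_sum, Finset.sum_mul]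
  rw [Finset.sum_comm]
  exact Finset.sum_congr rfl fun j _ => Finset.sum_congr rfl fun i _ => by ring

theorem kernelOp_plusComb (hR : MeasurePreserving R μ μ) (hRR : Involutive R)
    (hπL2 : ∀ i, MemLp (π i) 2 μ)
    (heven : ∀ i : Fin (n + m), (i : ℕ) < n → (fun x => π i (R x)) = π i)
    (hodd : ∀ i : Fin (n + m), n ≤ (i : ℕ) → (fun x => π i (R x)) = fun x => - π i x)
    (hAsymm : A.IsSymm)
    (hblock : ∀ i j : Fin (n + m),
      (((i : ℕ) < n ∧ n ≤ (j : ℕ)) ∨ (n ≤ (i : ℕ) ∧ (j : ℕ) < n)) → A i j = 0)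
    (v : Fin n → ℝ) :
    kernelOp μ A π (plusComb π v) = plusComb π (plusMatrix μ A π *ᵥ v) := by
  rw [kernelOp_eq_plusComb_of_even hR hRR hodd hblock
    (Filter.EventuallyEq.of_eq (plusComb_comp heven v))]
  have hcoeff : (fun i => ∫ y, plusComb π v y * π (Fin.castAdd m i) y ∂μ) = gram μ π *ᵥ v :=
    funext (integral_plusComb_mul hπL2 v)
  rw [hcoeff, ← Matrix.mulVec_transpose, (hAsymm.submatrix _).eq, plusMatrix,
    Matrix.smul_mulVec, Matrix.mulVec_mulVec]

theorem exists_ae_eq_plusComb_of_eigen (hR : MeasurePreserving R μ μ) (hRR : Involutive R)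
    (heven : ∀ i : Fin (n + m), (i : ℕ) < n → (fun x => π i (R x)) = π i)
    (hodd : ∀ i : Fin (n + m), n ≤ (i : ℕ) → (fun x => π i (R x)) = fun x => - π i x)
    (hblock : ∀ i j : Fin (n + m),
      (((i : ℕ) < n ∧ n ≤ (j : ℕ)) ∨ (n ≤ (i : ℕ) ∧ (j : ℕ) < n)) → A i j = 0)
    {lam : ℝ} (hlam : lam ≠ 0)
    (hsigned : ∀ f : S → ℝ, MemLp f 2 μ → kernelOp μ A π f =ᵐ[μ] (fun x => lam * f x) →
      (∀ᵐ x ∂μ, 0 ≤ f x) ∨ (∀ᵐ x ∂μ, f x ≤ 0))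
    (honedim : ∀ f g : S → ℝ, MemLp f 2 μ → kernelOp μ A π f =ᵐ[μ] (fun x => lam * f x) →
      MemLp g 2 μ → kernelOp μ A π g =ᵐ[μ] (fun x => lam * g x) →
      ¬ g =ᵐ[μ] 0 → ∃ c : ℝ, f =ᵐ[μ] fun x => c * g x)
    {f : S → ℝ} (hf : MemLp f 2 μ) (heig : kernelOp μ A π f =ᵐ[μ] fun x => lam * f x) :
    ∃ c : Fin n → ℝ, f =ᵐ[μ] plusComb π c := by
  by_cases hf0 : f =ᵐ[μ] 0
  · exact ⟨0, by rwa [plusComb_zero]⟩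
  have heigR : kernelOp μ A π (fun y => f (R y)) =ᵐ[μ] fun x => lam * f (R x) := by
    filter_upwards [hR.quasiMeasurePreserving.ae heig] with x hx
    rw [kernelOp_comp hR hRR heven hodd hblock, hx]
  obtain ⟨c, hc⟩ := honedim _ f (hf.comp_measurePreserving hR) heigR hf heig hf0
  have hfeven := comp_ae_eq_self_of_signed hR.quasiMeasurePreserving hRR hc hf0
    (hsigned f hf heig)
  obtain ⟨w, hw⟩ : ∃ w, kernelOp μ A π f = plusComb π w :=
    ⟨_, kernelOp_eq_plusComb_of_even hR hRR hodd hblock hfeven⟩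
  refine ⟨lam⁻¹ • w, ?_⟩
  filter_upwards [heig] with x hx
  rw [plusComb_smul, ← hw, hx, inv_mul_cancel_left₀ hlam]

end KernelOperator

section MatrixOnPlus

variable {S : Type*} [MeasurableSpace S] {μ : Measure S} {n m : ℕ} {π : Fin (n + m) → S → ℝ}
  {T : (S → ℝ) → S → ℝ} {Λ : Matrix (Fin n) (Fin n) ℝ}

theorem mulVec_eq_smul_of_eigen (hind : ∀ c : Fin n → ℝ, plusComb π c =ᵐ[μ] 0 → c = 0)
    (hspan : ∀ v, T (plusComb π v) = plusComb π (Λ *ᵥ v)) {lam : ℝ} {v : Fin n → ℝ}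
    (heig : T (plusComb π v) =ᵐ[μ] fun x => lam * plusComb π v x) :
    Λ *ᵥ v = lam • v := by
  refine sub_eq_zero.mp (hind _ ?_)
  filter_upwards [heig] with x hx
  rw [plusComb_sub, plusComb_smul, ← hx, hspan, sub_self, Pi.zero_apply]

theorem le_of_mulVec_eq_smul (hπL2 : ∀ i, MemLp (π i) 2 μ)
    (hind : ∀ c : Fin n → ℝ, plusComb π c =ᵐ[μ] 0 → c = 0)
    (hspan : ∀ v, T (plusComb π v) = plusComb π (Λ *ᵥ v)) {lam : ℝ} (hlam : 0 < lam)
    (hnorm : ∀ f : S → ℝ, MemLp f 2 μ → ∫ x, (T f x) ^ 2 ∂μ ≤ lam ^ 2 * ∫ x, (f x) ^ 2 ∂μ)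
    {ν : ℝ} {v : Fin n → ℝ} (hv : v ≠ 0) (hν : Λ *ᵥ v = ν • v) : ν ≤ lam := by
  have hL2 := memLp_plusComb hπL2 v
  have hpos := integral_sq_pos_of_memLp hL2 fun h => hv (hind v h)
  have hbound := hnorm _ hL2
  simp only [hspan, hν, plusComb_smul, mul_pow, integral_const_mul] at hbound
  exact (abs_le_of_sq_le_sq (le_of_mul_le_mul_right hbound hpos) hlam.le).trans' (le_abs_self ν)

end MatrixOnPlus

theorem stmt4_general {S : Type*} [MeasurableSpace S] (μ₀ : Measure S)
    (n m : ℕ) (π : Fin (n + m) → S → ℝ)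
    (hπL2 : ∀ i, MemLp (π i) 2 μ₀)
    (hind : ∀ c : Fin n → ℝ,
      (fun x => ∑ i, c i * π (Fin.castAdd m i) x) =ᵐ[μ₀] (fun _ => (0:ℝ)) → c = 0)
    (R : S → S) (hR : MeasurePreserving R μ₀ μ₀) (hRR : R ∘ R = id)
    (hπR_even : ∀ i : Fin (n + m), (i : ℕ) < n → (fun x => π i (R x)) = π i)
    (hπR_odd : ∀ i : Fin (n + m), n ≤ (i : ℕ) → (fun x => π i (R x)) = fun x => - π i x)
    (A : Matrix (Fin (n + m)) (Fin (n + m)) ℝ) (hAsymm : A.IsSymm)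
    (hblock : ∀ i j : Fin (n + m),
      (((i : ℕ) < n ∧ n ≤ (j : ℕ)) ∨ (n ≤ (i : ℕ) ∧ (j : ℕ) < n)) → A i j = 0)
    (T : (S → ℝ) → (S → ℝ))
    (hT : ∀ f x, T f x = 2 * ∑ i, ∑ j, A i j * (∫ y, f y * π i y ∂μ₀) * π j x)
    (lam : ℝ) (hlam : 0 < lam)
    -- `lam` is the operator norm of `T` on `L²(μ₀)`:
    (hnorm : ∀ f : S → ℝ, MemLp f 2 μ₀ →
      ∫ x, (T f x)^2 ∂μ₀ ≤ lam^2 * ∫ x, (f x)^2 ∂μ₀)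
    -- `lam` is attained as an eigenvalue:
    (hex : ∃ f : S → ℝ, MemLp f 2 μ₀ ∧ T f =ᵐ[μ₀] (fun x => lam * f x) ∧
      ¬ f =ᵐ[μ₀] (fun _ => (0:ℝ)))
    -- eigenfunctions for `lam` are single-signed a.e.:
    (hsigned : ∀ f : S → ℝ, MemLp f 2 μ₀ → T f =ᵐ[μ₀] (fun x => lam * f x) →
      (∀ᵐ x ∂μ₀, 0 ≤ f x) ∨ (∀ᵐ x ∂μ₀, f x ≤ 0))
    -- the eigenspace for `lam` is one-dimensional:
    (honedim : ∀ f g : S → ℝ, MemLp f 2 μ₀ → T f =ᵐ[μ₀] (fun x => lam * f x) →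
      MemLp g 2 μ₀ → T g =ᵐ[μ₀] (fun x => lam * g x) →
      ¬ g =ᵐ[μ₀] (fun _ => (0:ℝ)) → ∃ c : ℝ, f =ᵐ[μ₀] fun x => c * g x)
    (Λ : Matrix (Fin n) (Fin n) ℝ)
    (hΛ : ∀ i j, Λ i j = 2 * ∑ k : Fin n, A (Fin.castAdd m i) (Fin.castAdd m k) *
      ∫ x, π (Fin.castAdd m k) x * π (Fin.castAdd m j) x ∂μ₀) :
    -- the eigenspace is contained in `E₊`:
    (∀ f : S → ℝ, MemLp f 2 μ₀ → T f =ᵐ[μ₀] (fun x => lam * f x) →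
      ∃ c : Fin n → ℝ, f =ᵐ[μ₀] fun x => ∑ i, c i * π (Fin.castAdd m i) x) ∧
    -- `lam` is the largest eigenvalue of `Λ`:
    (∃ v : Fin n → ℝ, v ≠ 0 ∧ Λ.mulVec v = lam • v) ∧
    (∀ (μ : ℝ) (v : Fin n → ℝ), v ≠ 0 → Λ.mulVec v = μ • v → μ ≤ lam) := by
  have hinv : Involutive R := congrFun hRR
  obtain rfl : T = kernelOp μ₀ A π := funext fun f => funext (hT f)
  obtain rfl : Λ = plusMatrix μ₀ A π := by
    ext i j
    simp [hΛ, plusMatrix, gram, Matrix.mul_apply, Finset.mul_sum]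
  have hspan := kernelOp_plusComb hR hinv hπL2 hπR_even hπR_odd hAsymm hblock
  have hplus : ∀ f : S → ℝ, MemLp f 2 μ₀ → kernelOp μ₀ A π f =ᵐ[μ₀] (fun x => lam * f x) →
      ∃ c : Fin n → ℝ, f =ᵐ[μ₀] plusComb π c := fun f hf heig =>
    exists_ae_eq_plusComb_of_eigen hR hinv hπR_even hπR_odd hblock hlam.ne' hsigned honedim hf heig
  refine ⟨hplus, ?_, fun ν v hv hν => le_of_mulVec_eq_smul hπL2 hind hspan hlam hnorm hv hν⟩
  obtain ⟨f, hf, heig, hf0⟩ := hex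
  obtain ⟨c, hc⟩ := hplus f hf heig
  refine ⟨c, fun hc0 => hf0 (by rwa [hc0, plusComb_zero] at hc), ?_⟩
  refine mulVec_eq_smul_of_eigen hind hspan ?_
  rw [← kernelOp_congr_ae hc]
  filter_upwards [heig, hc] with x h₁ h₂
  rw [h₁, h₂]

/-- Top eigenspace of the bilinear convolution operator `T` lies in
`E₊ = span(π₁,…,π_n)`, and the operator-norm eigenvalue `λ = ‖T‖` equals the
largest eigenvalue of the matrix `Λ` of `T|_{E₊}` in the basis `π₁,…,π_n`. -/
theorem stmt4 {S : Type*} [MeasurableSpace S] (μ₀ : Measure S) [IsFiniteMeasure μ₀]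
    (n m : ℕ) (π : Fin (n + m) → S → ℝ)
    (hπL2 : ∀ i, MemLp (π i) 2 μ₀)
    (hπnn : ∀ i : Fin (n + m), (i : ℕ) < n → ∀ x, 0 ≤ π i x)
    (hind : ∀ c : Fin n → ℝ,
      (fun x => ∑ i, c i * π (Fin.castAdd m i) x) =ᵐ[μ₀] (fun _ => (0:ℝ)) → c = 0)
    (R : S → S) (hR : MeasurePreserving R μ₀ μ₀) (hRR : R ∘ R = id)
    (hπR_even : ∀ i : Fin (n + m), (i : ℕ) < n → (fun x => π i (R x)) = π i)
    (hπR_odd : ∀ i : Fin (n + m), n ≤ (i : ℕ) → (fun x => π i (R x)) = fun x => - π i x)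
    (A : Matrix (Fin (n + m)) (Fin (n + m)) ℝ) (hAsymm : A.IsSymm)
    (hblock : ∀ i j : Fin (n + m),
      (((i : ℕ) < n ∧ n ≤ (j : ℕ)) ∨ (n ≤ (i : ℕ) ∧ (j : ℕ) < n)) → A i j = 0)
    (hAplus : ∀ i j : Fin (n + m), (i : ℕ) < n → (j : ℕ) < n → 0 ≤ A i j)
    (T : (S → ℝ) → (S → ℝ))
    (hT : ∀ f x, T f x = 2 * ∑ i, ∑ j, A i j * (∫ y, f y * π i y ∂μ₀) * π j x)
    (lam : ℝ) (hlam : 0 < lam)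
    -- `lam` is the operator norm of `T` on `L²(μ₀)`:
    (hnorm : ∀ f : S → ℝ, MemLp f 2 μ₀ →
      ∫ x, (T f x)^2 ∂μ₀ ≤ lam^2 * ∫ x, (f x)^2 ∂μ₀)
    -- `lam` is attained as an eigenvalue:
    (hex : ∃ f : S → ℝ, MemLp f 2 μ₀ ∧ T f =ᵐ[μ₀] (fun x => lam * f x) ∧
      ¬ f =ᵐ[μ₀] (fun _ => (0:ℝ)))
    -- eigenfunctions for `lam` are single-signed a.e.:
    (hsigned : ∀ f : S → ℝ, MemLp f 2 μ₀ → T f =ᵐ[μ₀] (fun x => lam * f x) →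
      (∀ᵐ x ∂μ₀, 0 ≤ f x) ∨ (∀ᵐ x ∂μ₀, f x ≤ 0))
    -- the eigenspace for `lam` is one-dimensional:
    (honedim : ∀ f g : S → ℝ, MemLp f 2 μ₀ → T f =ᵐ[μ₀] (fun x => lam * f x) →
      MemLp g 2 μ₀ → T g =ᵐ[μ₀] (fun x => lam * g x) →
      ¬ g =ᵐ[μ₀] (fun _ => (0:ℝ)) → ∃ c : ℝ, f =ᵐ[μ₀] fun x => c * g x)
    (Λ : Matrix (Fin n) (Fin n) ℝ)
    (hΛ : ∀ i j, Λ i j = 2 * ∑ k : Fin n, A (Fin.castAdd m i) (Fin.castAdd m k) *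
      ∫ x, π (Fin.castAdd m k) x * π (Fin.castAdd m j) x ∂μ₀) :
    -- the eigenspace is contained in `E₊`:
    (∀ f : S → ℝ, MemLp f 2 μ₀ → T f =ᵐ[μ₀] (fun x => lam * f x) →
      ∃ c : Fin n → ℝ, f =ᵐ[μ₀] fun x => ∑ i, c i * π (Fin.castAdd m i) x) ∧
    -- `lam` is the largest eigenvalue of `Λ`:
    (∃ v : Fin n → ℝ, v ≠ 0 ∧ Λ.mulVec v = lam • v) ∧
    (∀ (μ : ℝ) (v : Fin n → ℝ), v ≠ 0 → Λ.mulVec v = μ • v → μ ≤ lam) :=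
  stmt4_general μ₀ n m π hπL2 hind R hR hRR hπR_even hπR_odd A hAsymm hblock T hT lam hlam hnorm hex
    hsigned honedim Λ hΛ
end

section
/- In the bilinear coagulation setting, the survival function ρ_t (maximal solution of ρ_t(x) = 1 − exp(−t(Tρ_t)(x)) with T the convolution operator of the kernel k(x,y) = 2∑_{i,j} a_{ij}π_i(x)π_j(y)) takes the form ρ_t(x) = 1 − exp(−∑_{i=1}^n c_t^i π_i(x)) for some nonnegative constants c_t^1,…,c_t^n, where the constants are given by c_t^i = 2t ∑_{j=1}^n a_{ij} ⟨π_j ρ_t, μ₀⟩. -/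
open MeasureTheory Finset

/-! The symmetry `R` maps solutions of the fixed-point equation to solutions, because the kernel
is `R × R`-invariant (the mixed even/odd blocks of `A` vanish and odd·odd products are even).
Hence the maximal solution `ρ` is `R`-invariant, so its moments against the odd conserved
quantities vanish. Expanding `Tρ` then leaves only the even block, which gives the stated form
of the exponent; the coefficients are nonnegative since the even block of `A`, the even `π_i`
and `ρ` are. -/

theorem IsGreatest.comp_eq_of_involutive {S α : Type*} [PartialOrder α] {s : Set (S → α)}
    {ρ : S → α} {R : S → S} (hρ : IsGreatest s ρ) (hs : ∀ f ∈ s, f ∘ R ∈ s)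
    (hR : Function.Involutive R) : ρ ∘ R = ρ := by
  have hle : ρ ∘ R ≤ ρ := hρ.2 (hs ρ hρ.1)
  refine le_antisymm hle fun x => ?_
  simpa only [Function.comp_apply, hR x] using hle (R x)

theorem Fin.sum_univ_add_eq_sum_castAdd {M : Type*} [AddCommMonoid M] {n m : ℕ}
    {f : Fin (n + m) → M} (hf : ∀ i : Fin m, f (Fin.natAdd n i) = 0) :
    ∑ i, f i = ∑ i : Fin n, f (Fin.castAdd m i) := by
  rw [Fin.sum_univ_add, sum_eq_zero fun i _ => hf i, add_zero]

namespace MeasureTheory.MeasurePreserving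

variable {S E : Type*} [MeasurableSpace S] {μ : Measure S} {R : S → S}
  [NormedAddCommGroup E] [NormedSpace ℝ E]

theorem integral_comp_of_involutive_s6 (hR : MeasurePreserving R μ μ)
    (hinv : Function.Involutive R) (g : S → E) : ∫ x, g (R x) ∂μ = ∫ x, g x ∂μ :=
  hR.integral_comp (MeasurableEquiv.ofInvolutive R hinv hR.measurable).measurableEmbedding g

theorem integral_eq_zero_of_involutive_of_odd (hR : MeasurePreserving R μ μ)
    (hinv : Function.Involutive R) {g : S → E} (hg : ∀ x, g (R x) = -g x) :
    ∫ x, g x ∂μ = 0 := by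
  have h := hR.integral_comp_of_involutive_s6 hinv g
  simp only [hg, integral_neg] at h
  have : IsAddTorsionFree E := .of_isTorsionFree ℝ E
  exact neg_eq_self.mp h

theorem integral_kernel_mul_comp_of_involutive (hR : MeasurePreserving R μ μ)
    (hinv : Function.Involutive R) {k : S → S → ℝ} (hk : ∀ x y, k (R x) (R y) = k x y)
    (f : S → ℝ) (x : S) : ∫ y, k x y * f (R y) ∂μ = ∫ y, k (R x) y * f y ∂μ := by
  rw [← hR.integral_comp_of_involutive_s6 hinv fun y => k (R x) y * f y]
  simp only [hk]

end MeasureTheory.MeasurePreserving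

def survivalSolutions {S : Type*} [MeasurableSpace S] (k : S → S → ℝ) (μ : Measure S)
    (t : ℝ) : Set (S → ℝ) :=
  {ρ | Measurable ρ ∧ (∀ x, 0 ≤ ρ x ∧ ρ x ≤ 1) ∧
    ∀ x, ρ x = 1 - Real.exp (-(t * ∫ y, k x y * ρ y ∂μ))}

theorem comp_mem_survivalSolutions {S : Type*} [MeasurableSpace S] {μ : Measure S}
    {R : S → S} (hR : MeasurePreserving R μ μ) (hinv : Function.Involutive R) {k : S → S → ℝ}
    (hk : ∀ x y, k (R x) (R y) = k x y) {t : ℝ} {f : S → ℝ}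
    (hf : f ∈ survivalSolutions k μ t) : f ∘ R ∈ survivalSolutions k μ t := by
  obtain ⟨hmeas, hbound, hfix⟩ := hf
  refine ⟨hmeas.comp hR.measurable, fun x => hbound (R x), fun x => ?_⟩
  rw [Function.comp_apply, hfix, ← hR.integral_kernel_mul_comp_of_involutive hinv hk]
  rfl

def bilinearKernel {ι S : Type*} [Fintype ι] (A : Matrix ι ι ℝ) (π : ι → S → ℝ) (x y : S) :
    ℝ :=
  2 * ∑ i, ∑ j, A i j * π i x * π j y

section bilinearKernel

variable {ι S : Type*} [Fintype ι] {A : Matrix ι ι ℝ} {π : ι → S → ℝ}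

theorem bilinearKernel_comp_of_parity (p : ι → Prop) {R : S → S}
    (heven : ∀ i, p i → ∀ x, π i (R x) = π i x) (hodd : ∀ i, ¬ p i → ∀ x, π i (R x) = -π i x)
    (hblock : ∀ i j, (p i ∧ ¬ p j) ∨ (¬ p i ∧ p j) → A i j = 0) (x y : S) :
    bilinearKernel A π (R x) (R y) = bilinearKernel A π x y := by
  unfold bilinearKernel
  congr 1
  refine sum_congr rfl fun i _ => sum_congr rfl fun j _ => ?_
  by_cases hi : p i <;> by_cases hj : p j
  · rw [heven i hi, heven j hj]
  · simp [hblock i j (.inl ⟨hi, hj⟩)]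
  · simp [hblock i j (.inr ⟨hi, hj⟩)]
  · rw [hodd i hi, hodd j hj]; ring

theorem integral_bilinearKernel_mul [MeasurableSpace S] {μ : Measure S} {f : S → ℝ}
    (hf : ∀ j, Integrable (fun y => π j y * f y) μ) (x : S) :
    ∫ y, bilinearKernel A π x y * f y ∂μ =
      2 * ∑ i, ∑ j, A i j * π i x * ∫ y, π j y * f y ∂μ := by
  have hexpand : (fun y => bilinearKernel A π x y * f y) =
      fun y => 2 * ∑ i, ∑ j, A i j * π i x * (π j y * f y) := by
    funext y
    simp only [bilinearKernel, sum_mul, mul_assoc]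
  rw [hexpand, integral_const_mul,
    integral_finsetSum _ fun i _ => integrable_finsetSum _ fun j _ => (hf j).const_mul _]
  congr 1
  refine sum_congr rfl fun i _ => ?_
  rw [integral_finsetSum _ fun j _ => (hf j).const_mul _]
  simp only [integral_const_mul]

end bilinearKernel

theorem sum_bilinear_eq_sum_castAdd {n m : ℕ} (A : Matrix (Fin (n + m)) (Fin (n + m)) ℝ)
    (u v : Fin (n + m) → ℝ)
    (hblock : ∀ i j : Fin (n + m),
      (((i : ℕ) < n ∧ n ≤ (j : ℕ)) ∨ (n ≤ (i : ℕ) ∧ (j : ℕ) < n)) → A i j = 0)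
    (hv : ∀ j : Fin (n + m), n ≤ (j : ℕ) → v j = 0) :
    ∑ i, ∑ j, A i j * u i * v j = ∑ i : Fin n, ∑ j : Fin n,
      A (Fin.castAdd m i) (Fin.castAdd m j) * u (Fin.castAdd m i) * v (Fin.castAdd m j) := by
  have hodd_row : ∀ i : Fin m, ∑ j, A (Fin.natAdd n i) j * u (Fin.natAdd n i) * v j = 0 :=
    fun i => sum_eq_zero fun j _ => by
      rcases lt_or_ge (j : ℕ) n with hj | hj
      · simp [hblock (Fin.natAdd n i) j (.inr ⟨by simp, hj⟩)]
      · simp [hv j hj]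
  rw [Fin.sum_univ_add_eq_sum_castAdd hodd_row]
  refine sum_congr rfl fun i _ => Fin.sum_univ_add_eq_sum_castAdd fun j => ?_
  simp [hblock (Fin.castAdd m i) (Fin.natAdd n j) (.inl ⟨by simp, by simp⟩)]

theorem mul_two_mul_sum_sum_eq_sum_mul {ι κ : Type*} [Fintype ι] [Fintype κ] (t : ℝ)
    (a : ι → κ → ℝ) (u : ι → ℝ) (v : κ → ℝ) :
    t * (2 * ∑ i, ∑ j, a i j * u i * v j) = ∑ i, (2 * t * ∑ j, a i j * v j) * u i := by
  simp only [mul_sum, sum_mul]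
  exact sum_congr rfl fun i _ => sum_congr rfl fun j _ => by ring

theorem stmt6_general {S : Type*} [MeasurableSpace S] (μ₀ : Measure S)
    (n m : ℕ) (π : Fin (n + m) → S → ℝ)
    (hπint : ∀ i, Integrable (π i) μ₀)
    (hπnn : ∀ i : Fin (n + m), (i : ℕ) < n → ∀ x, 0 ≤ π i x)
    (R : S → S)
    (hR : MeasurePreserving R μ₀ μ₀) (hRR : R ∘ R = id)
    (hπR_even : ∀ i : Fin (n + m), (i : ℕ) < n → (fun x => π i (R x)) = π i)
    (hπR_odd : ∀ i : Fin (n + m), n ≤ (i : ℕ) → (fun x => π i (R x)) = fun x => - π i x)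
    (A : Matrix (Fin (n + m)) (Fin (n + m)) ℝ)
    (hblock : ∀ i j : Fin (n + m),
      (((i : ℕ) < n ∧ n ≤ (j : ℕ)) ∨ (n ≤ (i : ℕ) ∧ (j : ℕ) < n)) → A i j = 0)
    (hAplus : ∀ i j : Fin (n + m), (i : ℕ) < n → (j : ℕ) < n → 0 ≤ A i j)
    (t : ℝ) (ht : 0 < t)
    (ρ : S → ℝ) (hρmeas : Measurable ρ)
    (hρ01 : ∀ x, 0 ≤ ρ x ∧ ρ x ≤ 1)
    (hρfix : ∀ x, ρ x =
      1 - Real.exp (-(t * ∫ y, (2 * ∑ i, ∑ j, A i j * π i x * π j y) * ρ y ∂μ₀)))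
    (hρmax : ∀ ρ' : S → ℝ, Measurable ρ' → (∀ x, 0 ≤ ρ' x ∧ ρ' x ≤ 1) →
      (∀ x, ρ' x =
        1 - Real.exp (-(t * ∫ y, (2 * ∑ i, ∑ j, A i j * π i x * π j y) * ρ' y ∂μ₀))) →
      ∀ x, ρ' x ≤ ρ x) :
    ∃ c : Fin n → ℝ, (∀ i, 0 ≤ c i) ∧
      (∀ x, ρ x = 1 - Real.exp (-(∑ i, c i * π (Fin.castAdd m i) x))) ∧
      (∀ i : Fin n, c i = 2 * t * ∑ j : Fin n,
        A (Fin.castAdd m i) (Fin.castAdd m j) *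
          ∫ y, π (Fin.castAdd m j) y * ρ y ∂μ₀) := by
  have hinv : Function.Involutive R := congrFun hRR
  have hk : ∀ x y, bilinearKernel A π (R x) (R y) = bilinearKernel A π x y :=
    bilinearKernel_comp_of_parity (fun i : Fin (n + m) => (i : ℕ) < n)
      (fun i hi => congrFun (hπR_even i hi))
      (fun i hi => congrFun (hπR_odd i (not_lt.1 hi)))
      (fun i j h => hblock i j (by simpa only [not_lt] using h))
  have hρR : ∀ x, ρ (R x) = ρ x :=
    congrFun (IsGreatest.comp_eq_of_involutive
      (s := survivalSolutions (bilinearKernel A π) μ₀ t)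
      ⟨⟨hρmeas, hρ01, hρfix⟩, fun ρ' h => hρmax ρ' h.1 h.2.1 h.2.2⟩
      (fun f hf => comp_mem_survivalSolutions hR hinv hk hf) hinv)
  have hint : ∀ j, Integrable (fun y => π j y * ρ y) μ₀ := fun j =>
    (hπint j).mul_bdd hρmeas.aestronglyMeasurable (c := 1) (ae_of_all _ fun x => by
      rw [Real.norm_eq_abs, abs_le]; constructor <;> linarith [hρ01 x])
  have hodd : ∀ j : Fin (n + m), n ≤ (j : ℕ) → ∫ y, π j y * ρ y ∂μ₀ = 0 := fun j hj =>
    hR.integral_eq_zero_of_involutive_of_odd hinv fun y => by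
      rw [congrFun (hπR_odd j hj), hρR]; ring
  refine ⟨fun i => 2 * t * ∑ j : Fin n, A (Fin.castAdd m i) (Fin.castAdd m j) *
      ∫ y, π (Fin.castAdd m j) y * ρ y ∂μ₀, fun i => ?_, fun x => ?_, fun i => rfl⟩
  · refine mul_nonneg (by positivity) (sum_nonneg fun j _ => mul_nonneg
      (hAplus _ _ (by simp) (by simp)) (integral_nonneg fun y => ?_))
    exact mul_nonneg (hπnn _ (by simp) y) (hρ01 y).1
  · rw [hρfix x]
    change 1 - Real.exp (-(t * ∫ y, bilinearKernel A π x y * ρ y ∂μ₀)) = _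
    rw [integral_bilinearKernel_mul hint, sum_bilinear_eq_sum_castAdd A _ _ hblock hodd,
      mul_two_mul_sum_sum_eq_sum_mul]

/-- Form of the survival function for a bilinear kernel: the maximal solution of
`ρ(x) = 1 − exp(−t(Tρ)(x))` with `k(x,y) = 2∑ a_{ij} π_i(x) π_j(y)` has the form
`ρ(x) = 1 − exp(−∑_{i=1}^n c^i π_i(x))` with nonnegative constants
`c^i = 2t ∑_{j=1}^n a_{ij} ⟨π_j ρ, μ₀⟩`. -/
theorem stmt6 {S : Type*} [MeasurableSpace S] (μ₀ : Measure S) [IsFiniteMeasure μ₀]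
    (n m : ℕ) (π : Fin (n + m) → S → ℝ)
    (hπmeas : ∀ i, Measurable (π i)) (hπint : ∀ i, Integrable (π i) μ₀)
    (hπnn : ∀ i : Fin (n + m), (i : ℕ) < n → ∀ x, 0 ≤ π i x)
    (R : S → S) (hRmeas : Measurable R)
    (hR : MeasurePreserving R μ₀ μ₀) (hRR : R ∘ R = id)
    (hπR_even : ∀ i : Fin (n + m), (i : ℕ) < n → (fun x => π i (R x)) = π i)
    (hπR_odd : ∀ i : Fin (n + m), n ≤ (i : ℕ) → (fun x => π i (R x)) = fun x => - π i x)
    (A : Matrix (Fin (n + m)) (Fin (n + m)) ℝ) (hAsymm : A.IsSymm)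
    (hblock : ∀ i j : Fin (n + m),
      (((i : ℕ) < n ∧ n ≤ (j : ℕ)) ∨ (n ≤ (i : ℕ) ∧ (j : ℕ) < n)) → A i j = 0)
    (hAplus : ∀ i j : Fin (n + m), (i : ℕ) < n → (j : ℕ) < n → 0 ≤ A i j)
    (t : ℝ) (ht : 0 < t)
    (ρ : S → ℝ) (hρmeas : Measurable ρ)
    (hρ01 : ∀ x, 0 ≤ ρ x ∧ ρ x ≤ 1)
    (hρfix : ∀ x, ρ x =
      1 - Real.exp (-(t * ∫ y, (2 * ∑ i, ∑ j, A i j * π i x * π j y) * ρ y ∂μ₀)))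
    (hρmax : ∀ ρ' : S → ℝ, Measurable ρ' → (∀ x, 0 ≤ ρ' x ∧ ρ' x ≤ 1) →
      (∀ x, ρ' x =
        1 - Real.exp (-(t * ∫ y, (2 * ∑ i, ∑ j, A i j * π i x * π j y) * ρ' y ∂μ₀))) →
      ∀ x, ρ' x ≤ ρ x) :
    ∃ c : Fin n → ℝ, (∀ i, 0 ≤ c i) ∧
      (∀ x, ρ x = 1 - Real.exp (-(∑ i, c i * π (Fin.castAdd m i) x))) ∧
      (∀ i : Fin n, c i = 2 * t * ∑ j : Fin n,
        A (Fin.castAdd m i) (Fin.castAdd m j) *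
          ∫ y, π (Fin.castAdd m j) y * ρ y ∂μ₀) :=
  stmt6_general μ₀ n m π hπint hπnn R hR hRR hπR_even hπR_odd A hblock hAplus t ht ρ hρmeas hρ01
    hρfix hρmax
end

section
/- Let H be a real inner product space, Λ : H → H a self-adjoint bounded operator with largest eigenvalue λ = 1/t_g > 0 whose eigenspace is spanned by a unit vector ψ. Suppose c : [t_g, t_g + δ) → H is continuous with c(t_g) = 0, c(t) ≠ 0 for t > t_g, satisfying c(t) = t(Λc(t) − Σ(c(t)) + R(c(t))) where Σ is a continuous quadratic map with (ψ, Σ(ψ)) > 0 and ‖R(c)‖ = o(‖c‖²) as ‖c‖ → 0, and suppose the orthogonal projection P onto ψ^⊥ satisfies ‖Pc(t)‖ ≤ β‖c(t)‖² for small t − t_g. Writing c(t) = α(t)ψ + Pc(t) with α(t) > 0 for t slightly above t_g, then α(t)/(t − t_g) → 1/(t_g² (ψ, Σ(ψ))) as t ↓ t_g; consequently c is right-differentiable at t_g with derivative ψ/(t_g²(ψ,Σ(ψ))). -/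
/-!
Project the fixed point equation `c = t (Λ c - Σ(c) + R(c))` onto `ψ`. Since `Λ` is self-adjoint
and `Λ ψ = ψ / t_g`, this gives the exact scalar identity `α (t - t_g) = t_g t ⟪ψ, Σ(c) - R(c)⟫`
for `α = ⟪ψ, c⟫`. The bound `‖P c‖ ≤ β ‖c‖²` makes `P c = o(‖c‖)`, so `c` is comparable to `α`, and
then `⟪ψ, Σ(c)⟫ = α² ⟪ψ, Σ(ψ)⟫ + o(α²)` and `⟪ψ, R(c)⟫ = o(α²)`. Dividing the identity by `α²`
gives `α / (t - t_g) → 1 / (t_g² ⟪ψ, Σ(ψ)⟫)`; as `P c = o(α) = o(t - t_g)`, the slope of `c` at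
`t_g` has the same limit along `ψ`.
-/

open Set Filter Topology Asymptotics
open scoped RealInnerProductSpace

section

variable {H : Type*} [NormedAddCommGroup H] [InnerProductSpace ℝ H]

theorem inner_mul_sub_eq_of_eq_smul {Λ : H →L[ℝ] H} (hΛ : ∀ x y : H, ⟪Λ x, y⟫ = ⟪x, Λ y⟫)
    {tg : ℝ} (htg : tg ≠ 0) {ψ : H} (hψ : Λ ψ = (1 / tg) • ψ) {x G : H} {t : ℝ}
    (hx : x = t • (Λ x - G)) :
    ⟪ψ, x⟫ * (t - tg) = tg * t * ⟪ψ, G⟫ := by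
  have h : ⟪ψ, x⟫ = t * ((1 / tg) * ⟪ψ, x⟫ - ⟪ψ, G⟫) := by
    conv_lhs => rw [hx]
    rw [real_inner_smul_right, inner_sub_right, ← hΛ, hψ, real_inner_smul_left]
  field_simp at h
  linarith

theorem isLittleO_norm_pow_of_forall_le {E F : Type*} [NormedAddCommGroup E]
    [NormedAddCommGroup F] {R : E → F} {n : ℕ}
    (h : ∀ δ : ℝ, 0 < δ → ∃ ρ : ℝ, 0 < ρ ∧ ∀ x : E, ‖x‖ ≤ ρ → ‖R x‖ ≤ δ * ‖x‖ ^ n) :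
    R =o[𝓝 0] fun x => ‖x‖ ^ n := by
  refine isLittleO_iff.2 fun δ hδ => ?_
  obtain ⟨ρ, hρ, hR⟩ := h δ hδ
  filter_upwards [Metric.closedBall_mem_nhds 0 hρ] with x hx
  rw [norm_pow, norm_norm]
  exact hR x (mem_closedBall_zero_iff.1 hx)

theorem isLittleO_bilinear {E F G ι : Type*} [NormedAddCommGroup E] [NormedSpace ℝ E]
    [NormedAddCommGroup F] [NormedSpace ℝ F] [NormedAddCommGroup G] [NormedSpace ℝ G]
    (B : E →L[ℝ] F →L[ℝ] G) {l : Filter ι} {u : ι → E} {v : ι → F} {g : ι → ℝ}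
    (hu : u =o[l] g) (hv : v =O[l] g) :
    (fun i => B (u i) (v i)) =o[l] fun i => g i ^ 2 := by
  simpa only [sq] using
    B.isBoundedBilinearMap.isBigO_comp.trans_isLittleO (hu.norm_left.mul_isBigO hv.norm_left)

section Projection

variable {ι : Type*} {l : Filter ι} {c : ι → H} {ψ : H}

theorem isBigO_inner_of_isLittleO_sub_inner_smul
    (hw : (fun i => c i - ⟪ψ, c i⟫ • ψ) =o[l] c) :
    c =O[l] fun i => ⟪ψ, c i⟫ := by
  have hc : c =O[l] fun i => ⟪ψ, c i⟫ • ψ := by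
    simpa only [sub_sub_cancel] using hw.right_isBigO_sub
  refine hc.trans (IsBigO.of_bound ‖ψ‖ (Eventually.of_forall fun i => ?_))
  rw [norm_smul, mul_comm]

theorem isLittleO_inner_bilinear_sub (B : H →L[ℝ] H →L[ℝ] H)
    (hw : (fun i => c i - ⟪ψ, c i⟫ • ψ) =o[l] c) :
    (fun i => ⟪ψ, B (c i) (c i)⟫ - ⟪ψ, B ψ ψ⟫ * ⟪ψ, c i⟫ ^ 2) =o[l] fun i => ⟪ψ, c i⟫ ^ 2 := by
  set α : ι → ℝ := fun i => ⟪ψ, c i⟫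
  set w : ι → H := fun i => c i - α i • ψ
  have hcα : c =O[l] α := isBigO_inner_of_isLittleO_sub_inner_smul hw
  have hwα : w =o[l] α := hw.trans_isBigO hcα
  have hψα : (fun i => α i • ψ) =O[l] α :=
    IsBigO.of_bound ‖ψ‖ (Eventually.of_forall fun i => by rw [norm_smul, mul_comm])
  have hsplit : ∀ i, B (c i) (c i) - α i ^ 2 • B ψ ψ = B (w i) (c i) + B (α i • ψ) (w i) :=
    fun i => by
      have hc : c i = α i • ψ + w i := by simp only [w]; abel
      rw [hc]
      simp only [map_add, map_smul, add_apply, smul_apply]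
      module
  have hinner : (fun i => ⟪ψ, B (c i) (c i)⟫ - ⟪ψ, B ψ ψ⟫ * α i ^ 2)
      = fun i => ⟪ψ, B (w i) (c i) + B.flip (w i) (α i • ψ)⟫ := funext fun i => by
    rw [B.flip_apply, ← hsplit, inner_sub_right, real_inner_smul_right, mul_comm]
  rw [hinner]
  exact ((innerSL ℝ ψ).isBigO_comp _ l).trans_isLittleO
    ((isLittleO_bilinear B hwα hcα).add (isLittleO_bilinear B.flip hwα hψα))

theorem isLittleO_inner_comp_of_isLittleO_sq {R : H → H} (hR : R =o[𝓝 0] fun x => ‖x‖ ^ 2)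
    (hc : Tendsto c l (𝓝 0)) (hcα : c =O[l] fun i => ⟪ψ, c i⟫) :
    (fun i => ⟪ψ, R (c i)⟫) =o[l] fun i => ⟪ψ, c i⟫ ^ 2 :=
  ((innerSL ℝ ψ).isBigO_comp _ l).trans_isLittleO
    ((hR.comp_tendsto hc).trans_isBigO (hcα.norm_left.pow 2))

end Projection

theorem tendsto_div_of_isLittleO_sub {ι : Type*} {l : Filter ι} {f g : ι → ℝ} {σ : ℝ}
    (h : (fun i => f i - σ * g i) =o[l] g) (hg : ∀ᶠ i in l, g i ≠ 0) :
    Tendsto (fun i => f i / g i) l (𝓝 σ) := by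
  have h0 := h.tendsto_div_nhds_zero.add_const σ
  rw [zero_add] at h0
  refine h0.congr' (hg.mono fun i hi => ?_)
  field_simp
  ring

theorem tendsto_div_sub_of_mul_sub_eq {l : Filter ℝ} {a σ : ℝ} {α E : ℝ → ℝ} (hl : l ≤ 𝓝 a)
    (ha : a ≠ 0) (hσ : σ ≠ 0) (hE : Tendsto (fun t => E t / α t ^ 2) l (𝓝 σ))
    (hα : ∀ᶠ t in l, α t ≠ 0) (hkey : ∀ᶠ t in l, α t * (t - a) = a * t * E t) :
    Tendsto (fun t => α t / (t - a)) l (𝓝 (1 / (a ^ 2 * σ))) := by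
  have hlim : Tendsto (fun t => (a * t * (E t / α t ^ 2))⁻¹) l (𝓝 (a * a * σ)⁻¹) :=
    ((tendsto_const_nhds.mul (tendsto_id.mono_left hl)).mul hE).inv₀ (by positivity)
  rw [one_div, sq]
  refine hlim.congr' ((hα.and hkey).mono fun t ⟨hαt, hkt⟩ => ?_)
  rw [← mul_div_assoc, inv_div, ← hkt, sq, mul_div_mul_left _ _ hαt]

theorem hasDerivWithinAt_Ici_of_tendsto_inner_div {c : ℝ → H} {ψ : H} {a L : ℝ} (hca : c a = 0)
    (hL : Tendsto (fun t => ⟪ψ, c t⟫ / (t - a)) (𝓝[>] a) (𝓝 L))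
    (hw : (fun t => c t - ⟪ψ, c t⟫ • ψ) =o[𝓝[>] a] fun t => ⟪ψ, c t⟫) :
    HasDerivWithinAt c (L • ψ) (Ici a) a := by
  rw [← hasDerivWithinAt_Ioi_iff_Ici, hasDerivWithinAt_iff_tendsto_slope' self_notMem_Ioi]
  have hα : (fun t => ⟪ψ, c t⟫) =O[𝓝[>] a] fun t => t - a :=
    isBigO_of_div_tendsto_nhds (eventually_mem_nhdsWithin.mono fun t ht h =>
      absurd h (sub_ne_zero.2 ht.ne')) L hL
  have hslope : slope c a
      = fun t => (⟪ψ, c t⟫ / (t - a)) • ψ + (t - a)⁻¹ • (c t - ⟪ψ, c t⟫ • ψ) := by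
    funext t
    rw [slope_def_module, hca, sub_zero, div_eq_inv_mul, mul_smul, ← smul_add, add_sub_cancel]
  rw [hslope]
  simpa using (hL.smul_const ψ).add (hw.trans_isBigO hα).tendsto_inv_smul_nhds_zero

end

theorem stmt9_general {H : Type*} [NormedAddCommGroup H] [InnerProductSpace ℝ H]
    (Λ : H →L[ℝ] H) (hsa : ∀ x y : H, ⟪Λ x, y⟫ = ⟪x, Λ y⟫)
    (tg : ℝ) (htg : 0 < tg) (ψ : H)
    (heig : Λ ψ = (1 / tg) • ψ)
    (B : H →L[ℝ] H →L[ℝ] H) (hSigmaPos : 0 < ⟪ψ, B ψ ψ⟫)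
    (Rm : H → H)
    (hRm : ∀ δ : ℝ, 0 < δ → ∃ ρ : ℝ, 0 < ρ ∧ ∀ x : H, ‖x‖ ≤ ρ → ‖Rm x‖ ≤ δ * ‖x‖ ^ 2)
    (δ0 : ℝ) (hδ0 : 0 < δ0) (c : ℝ → H)
    (hc_cont : ContinuousOn c (Ico tg (tg + δ0)))
    (hc0 : c tg = 0)
    (heq : ∀ t ∈ Ico tg (tg + δ0), c t = t • (Λ (c t) - B (c t) (c t) + Rm (c t)))
    (β : ℝ)
    (hP : ∃ δ1 : ℝ, 0 < δ1 ∧ ∀ t ∈ Ico tg (tg + δ1),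
      ‖c t - ⟪ψ, c t⟫ • ψ‖ ≤ β * ‖c t‖ ^ 2)
    (hαpos : ∃ δ2 : ℝ, 0 < δ2 ∧ ∀ t ∈ Ioo tg (tg + δ2), 0 < ⟪ψ, c t⟫) :
    Tendsto (fun t => ⟪ψ, c t⟫ / (t - tg)) (nhdsWithin tg (Ioi tg))
      (nhds (1 / (tg ^ 2 * ⟪ψ, B ψ ψ⟫))) ∧
    HasDerivWithinAt c ((1 / (tg ^ 2 * ⟪ψ, B ψ ψ⟫)) • ψ) (Ici tg) tg := by
  obtain ⟨δ1, hδ1, hPc⟩ := hP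
  obtain ⟨δ2, hδ2, hα⟩ := hαpos
  have hc : Tendsto c (𝓝[>] tg) (𝓝 0) := by
    simpa only [hc0] using ((hc_cont tg ⟨le_rfl, by linarith⟩).mono_of_mem_nhdsWithin
      (Ico_mem_nhdsGT (by linarith))).tendsto
  have hw : (fun t => c t - ⟪ψ, c t⟫ • ψ) =o[𝓝[>] tg] c := by
    refine IsBigO.trans_isLittleO (g := fun t => ‖c t‖ ^ 2) (IsBigO.of_bound β ?_)
      ((isLittleO_norm_pow_id one_lt_two).comp_tendsto hc)
    filter_upwards [Ico_mem_nhdsGT (show tg < tg + δ1 by linarith)] with t ht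
    simpa only [norm_pow, norm_norm] using hPc t ht
  have hα0 : ∀ᶠ t in 𝓝[>] tg, ⟪ψ, c t⟫ ≠ 0 := by
    filter_upwards [Ioo_mem_nhdsGT (show tg < tg + δ2 by linarith)] with t ht
    exact (hα t ht).ne'
  have hkey : ∀ᶠ t in 𝓝[>] tg,
      ⟪ψ, c t⟫ * (t - tg) = tg * t * (⟪ψ, B (c t) (c t)⟫ - ⟪ψ, Rm (c t)⟫) := by
    filter_upwards [Ico_mem_nhdsGT (show tg < tg + δ0 by linarith)] with t ht
    rw [← inner_sub_right]
    exact inner_mul_sub_eq_of_eq_smul hsa htg.ne' heig (by rw [← sub_add, ← heq t ht])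
  have hcα := isBigO_inner_of_isLittleO_sub_inner_smul hw
  have hE : Tendsto (fun t => (⟪ψ, B (c t) (c t)⟫ - ⟪ψ, Rm (c t)⟫) / ⟪ψ, c t⟫ ^ 2) (𝓝[>] tg)
      (𝓝 ⟪ψ, B ψ ψ⟫) := by
    refine tendsto_div_of_isLittleO_sub ?_ (hα0.mono fun t h => pow_ne_zero 2 h)
    have hR := isLittleO_inner_comp_of_isLittleO_sq (isLittleO_norm_pow_of_forall_le hRm) hc hcα
    exact ((isLittleO_inner_bilinear_sub B hw).sub hR).congr_left fun t => by ring
  have hlim := tendsto_div_sub_of_mul_sub_eq nhdsWithin_le_nhds htg.ne' hSigmaPos.ne' hE hα0 hkey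
  exact ⟨hlim, hasDerivWithinAt_Ici_of_tendsto_inner_div hc0 hlim (hw.trans_isBigO hcα)⟩

/-- First-order phase transition: the coefficient `α(t) = ⟪ψ, c(t)⟫` of the
solution of the fixed point equation `c = t(Λc − Σ(c) + R(c))` along the top
eigenvector satisfies `α(t)/(t−t_g) → 1/(t_g²(ψ,Σ(ψ)))` as `t ↓ t_g`, and `c`
is right-differentiable at `t_g` with derivative `ψ/(t_g²(ψ,Σ(ψ)))`. -/
theorem stmt9 {H : Type*} [NormedAddCommGroup H] [InnerProductSpace ℝ H]
    (Λ : H →L[ℝ] H) (hsa : ∀ x y : H, ⟪Λ x, y⟫ = ⟪x, Λ y⟫)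
    (tg : ℝ) (htg : 0 < tg) (ψ : H) (hψ : ‖ψ‖ = 1)
    (heig : Λ ψ = (1 / tg) • ψ)
    (heigsp : ∀ x : H, Λ x = (1 / tg) • x → ∃ r : ℝ, x = r • ψ)
    (B : H →L[ℝ] H →L[ℝ] H) (hSigmaPos : 0 < ⟪ψ, B ψ ψ⟫)
    (Rm : H → H)
    (hRm : ∀ δ : ℝ, 0 < δ → ∃ ρ : ℝ, 0 < ρ ∧ ∀ x : H, ‖x‖ ≤ ρ → ‖Rm x‖ ≤ δ * ‖x‖ ^ 2)
    (δ0 : ℝ) (hδ0 : 0 < δ0) (c : ℝ → H)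
    (hc_cont : ContinuousOn c (Ico tg (tg + δ0)))
    (hc0 : c tg = 0)
    (hcne : ∀ t ∈ Ioo tg (tg + δ0), c t ≠ 0)
    (heq : ∀ t ∈ Ico tg (tg + δ0), c t = t • (Λ (c t) - B (c t) (c t) + Rm (c t)))
    (β : ℝ)
    (hP : ∃ δ1 : ℝ, 0 < δ1 ∧ ∀ t ∈ Ico tg (tg + δ1),
      ‖c t - ⟪ψ, c t⟫ • ψ‖ ≤ β * ‖c t‖ ^ 2)
    (hαpos : ∃ δ2 : ℝ, 0 < δ2 ∧ ∀ t ∈ Ioo tg (tg + δ2), 0 < ⟪ψ, c t⟫) :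
    Tendsto (fun t => ⟪ψ, c t⟫ / (t - tg)) (nhdsWithin tg (Ioi tg))
      (nhds (1 / (tg ^ 2 * ⟪ψ, B ψ ψ⟫))) ∧
    HasDerivWithinAt c ((1 / (tg ^ 2 * ⟪ψ, B ψ ψ⟫)) • ψ) (Ici tg) tg :=
  stmt9_general Λ hsa tg htg ψ heig B hSigmaPos Rm hRm δ0 hδ0 c hc_cont hc0 heq β hP hαpos
end
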